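/- arXiv:nlin/0002008 — 4 statements merged into one kernel-verified Lean document; each statement's English description precedes it below -/
import Mathlib

section
/- Let L be the n×n matrix with diagonal entries μ(b_k − λ), entries −μ^2 on the superdiagonal and in position (n,1), and entries a_k on the subdiagonal and a_n in position (1,n). Then det(L) = −C^2 + H^{(1)}(λ) C + H^{(2)}, where C = μ^n, H^{(2)} = (−1)^{n+1} a_1⋯a_n, and H^{(1)}(λ) is a polynomial in λ (with coefficients polynomial in the a_i, b_i) of the form (−1)^n λ^n + lower-order terms, independent of μ. -/
open MvPolynomial

/-- Coefficient ring: polynomials in `a 0, …, a (n-1)` (the `Sum.inl` variables) and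
`b 0, …, b (n-1)` (the `Sum.inr` variables). -/
noncomputable abbrev TodaS (n : ℕ) := MvPolynomial (Fin n ⊕ Fin n) ℂ

/-- Ambient ring `ℂ[a,b][λ][μ]`: the inner polynomial variable is `λ`, the outer one
is `μ`. -/
noncomputable abbrev TodaA (n : ℕ) := Polynomial (Polynomial (TodaS n))

/-- The variable `a i` inside `TodaA n`. -/
noncomputable def tA {n : ℕ} (i : Fin n) : TodaA n :=
  Polynomial.C (Polynomial.C (X (Sum.inl i)))

/-- The periodic Toda Lax matrix `L` (0-based indices): `L k k = μ (b k − λ)`,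
`L k (k+1) = −μ²` and `L (n-1) 0 = −μ²`, `L (k+1) k = a k` and `L 0 (n-1) = a (n-1)`
(the latter is the paper's `a_n`), all other entries zero. -/
noncomputable def todaLax (n : ℕ) : Matrix (Fin n) (Fin n) (TodaA n) := fun i j =>
  if i = j then Polynomial.X * Polynomial.C (Polynomial.C (X (Sum.inr i)) - Polynomial.X)
  else if (j : ℕ) = (i : ℕ) + 1 then -Polynomial.X ^ 2
  else if (i : ℕ) = n - 1 ∧ (j : ℕ) = 0 then -Polynomial.X ^ 2
  else if (i : ℕ) = (j : ℕ) + 1 then tA j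
  else if (i : ℕ) = 0 ∧ (j : ℕ) = n - 1 then tA j
  else 0

namespace TodaAux
variable {m : ℕ}

lemma negpow_odd {R : Type*} [CommRing R] {k : ℕ} (h : Odd k) : (-1 : R)^k = -1 := by
  obtain ⟨j, rfl⟩ := h
  rw [pow_succ, pow_mul]
  have h1 : ((-1 : R))^2 = 1 := by ring
  rw [h1, one_pow, one_mul]

lemma negpow_even {R : Type*} [CommRing R] {k : ℕ} (h : Even k) : (-1 : R)^k = 1 := by
  obtain ⟨r, rfl⟩ := h
  rw [pow_add, ← mul_pow]
  have h1 : ((-1 : R)) * (-1) = 1 := by ring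
  rw [h1, one_pow]

def Adm (σ : Equiv.Perm (Fin (m+3))) : Prop := ∀ i, σ i = i ∨ σ i = i + 1 ∨ i = σ i + 1

noncomputable def qf (σ : Equiv.Perm (Fin (m+3))) (i : Fin (m+3)) :
    Polynomial (MvPolynomial (Fin (m+3) ⊕ Fin (m+3)) ℂ) :=
  if σ i = i then Polynomial.C (X (Sum.inr i)) - Polynomial.X
  else if σ i = i + 1 then Polynomial.C (X (Sum.inl i))
  else -1

def wf (σ : Equiv.Perm (Fin (m+3))) (i : Fin (m+3)) : ℕ :=
  if σ i = i then 1 else if σ i = i + 1 then 0 else 2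

lemma fin_add_one_val (c : Fin (m + 3)) :
    ((c + 1 : Fin (m + 3)) : ℕ) = if (c : ℕ) = m + 2 then 0 else (c : ℕ) + 1 := by
  have hc := c.isLt
  rw [Fin.val_add, Fin.val_one]
  split_ifs with h
  · rw [h]; simp [Nat.mod_self]
  · exact Nat.mod_eq_of_lt (by omega)

lemma add_one_ne (i : Fin (m + 3)) : i + 1 ≠ i := by
  have h := fin_add_one_val i
  have hi := i.isLt
  intro he
  rw [Fin.ext_iff] at he
  split_ifs at h <;> omega

lemma add_two_ne (i : Fin (m + 3)) : i + 1 + 1 ≠ i := by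
  have h1 := fin_add_one_val i
  have h2 := fin_add_one_val (i + 1)
  have hi := i.isLt
  have hi1 := (i + 1).isLt
  intro he
  rw [Fin.ext_iff] at he
  split_ifs at h1 h2 <;> omega

-- counting lemma
lemma weight_sum (σ : Equiv.Perm (Fin (m+3))) (h : Adm σ) :
    (∀ i, σ i = i + 1) ∨ (∀ i, i = σ i + 1) ∨ (∑ i, wf σ i = m + 3) := by
  classical
  have hex : ∀ i : Fin (m+3), ¬ (σ i = i + 1 ∧ i = σ i + 1) := by
    rintro i ⟨h1, h2⟩
    rw [h1] at h2
    exact add_two_ne i h2.symm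
  have hex2 : ∀ i : Fin (m+3), ¬ (σ i = i ∧ σ i = i + 1) := by
    rintro i ⟨h1, h2⟩
    rw [h1] at h2
    exact add_one_ne i h2.symm
  have hex3 : ∀ i : Fin (m+3), ¬ (σ i = i ∧ i = σ i + 1) := by
    rintro i ⟨h1, h2⟩
    rw [h1] at h2
    exact add_one_ne i h2.symm
  set U := Finset.univ.filter (fun i : Fin (m+3) => σ i = i + 1) with hU
  set D := Finset.univ.filter (fun i : Fin (m+3) => i = σ i + 1) with hD
  set F := Finset.univ.filter (fun i : Fin (m+3) => σ i = i) with hF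
  have hmemU : ∀ i, i ∈ U ↔ σ i = i + 1 := by
    intro i; simp [hU]
  have hmemD : ∀ i, i ∈ D ↔ i = σ i + 1 := by
    intro i; simp [hD]
  have hmemF : ∀ i, i ∈ F ↔ σ i = i := by
    intro i; simp [hF]
  have hdisj1 : Disjoint U D := by
    rw [Finset.disjoint_left]
    intro i hiU hiD
    exact hex i ⟨(hmemU i).1 hiU, (hmemD i).1 hiD⟩
  have hdisj2 : Disjoint (U ∪ D) F := by
    rw [Finset.disjoint_left]
    intro i hiUD hiF
    rcases Finset.mem_union.1 hiUD with h1 | h1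
    · exact hex2 i ⟨(hmemF i).1 hiF, (hmemU i).1 h1⟩
    · exact hex3 i ⟨(hmemF i).1 hiF, (hmemD i).1 h1⟩
  have hunion : (U ∪ D) ∪ F = Finset.univ := by
    apply Finset.eq_univ_of_forall
    intro i
    rw [Finset.mem_union, Finset.mem_union, hmemU, hmemD, hmemF]
    rcases h i with h1 | h1 | h1
    · exact Or.inr h1
    · exact Or.inl (Or.inl h1)
    · exact Or.inl (Or.inr h1)
  have hsplit : ∀ {M : Type} [AddCommMonoid M] (f : Fin (m+3) → M),
      ∑ i, f i = (∑ i ∈ U, f i + ∑ i ∈ D, f i) + ∑ i ∈ F, f i := by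
    intro M _ f
    rw [← Finset.sum_union hdisj1, ← Finset.sum_union hdisj2, hunion]
  have hcards : U.card + D.card + F.card = m + 3 := by
    have h1 := Finset.card_union_of_disjoint hdisj1
    have h2 := Finset.card_union_of_disjoint hdisj2
    have h3 : ((U ∪ D) ∪ F).card = m + 3 := by rw [hunion, Finset.card_univ, Fintype.card_fin]
    omega
  -- the ZMod identity
  have hcast : ∀ i : Fin (m+3), (((i + 1 : Fin (m+3)) : ℕ) : ZMod (m+3)) = ((i : ℕ) : ZMod (m+3)) + 1 := by
    intro i
    rw [Fin.val_add, Fin.val_one, ZMod.natCast_mod, Nat.cast_add, Nat.cast_one]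
  have hdelta : ∑ i : Fin (m+3), ((((σ i : Fin (m+3)) : ℕ) : ZMod (m+3)) - ((i : ℕ) : ZMod (m+3))) = 0 := by
    rw [Finset.sum_sub_distrib, Equiv.sum_comp σ (fun j : Fin (m+3) => ((j : ℕ) : ZMod (m+3))), sub_self]
  have hUD : (U.card : ZMod (m+3)) = (D.card : ZMod (m+3)) := by
    rw [hsplit] at hdelta
    have eU : ∑ i ∈ U, ((((σ i : Fin (m+3)) : ℕ) : ZMod (m+3)) - ((i : ℕ) : ZMod (m+3))) = (U.card : ZMod (m+3)) := by
      rw [Finset.sum_congr rfl (fun i hi => ?_), Finset.sum_const, nsmul_eq_mul, mul_one]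
      rw [(hmemU i).1 hi, hcast i, add_sub_cancel_left]
    have eD : ∑ i ∈ D, ((((σ i : Fin (m+3)) : ℕ) : ZMod (m+3)) - ((i : ℕ) : ZMod (m+3))) = -(D.card : ZMod (m+3)) := by
      rw [Finset.sum_congr rfl (fun i hi => ?_), Finset.sum_const, nsmul_eq_mul, mul_neg_one]
      have hmem := (hmemD i).1 hi
      have h4 : (((i : Fin (m+3)) : ℕ) : ZMod (m+3)) = (((σ i : Fin (m+3)) : ℕ) : ZMod (m+3)) + 1 := by
        conv_lhs => rw [hmem]
        exact hcast (σ i)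
      rw [h4]
      ring
    have eF : ∑ i ∈ F, ((((σ i : Fin (m+3)) : ℕ) : ZMod (m+3)) - ((i : ℕ) : ZMod (m+3))) = 0 := by
      apply Finset.sum_eq_zero
      intro i hi
      rw [(hmemF i).1 hi, sub_self]
    rw [eU, eD, eF, add_zero] at hdelta
    linear_combination hdelta
  -- from ZMod equality to ℕ
  have hmod : U.card ≡ D.card [MOD (m+3)] := (ZMod.natCast_eq_natCast_iff _ _ _).1 hUD
  have hdvd : ((m+3 : ℕ) : ℤ) ∣ (D.card : ℤ) - (U.card : ℤ) := (Nat.modEq_iff_dvd).1 hmod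
  obtain ⟨k, hk⟩ := hdvd
  have hbU : (U.card : ℤ) ≤ (m+3 : ℕ) := by exact_mod_cast Nat.le_of_lt_succ (by omega)
  have hbD : (D.card : ℤ) ≤ (m+3 : ℕ) := by exact_mod_cast Nat.le_of_lt_succ (by omega)
  have hbU0 : (0 : ℤ) ≤ (U.card : ℤ) := Int.natCast_nonneg _
  have hbD0 : (0 : ℤ) ≤ (D.card : ℤ) := Int.natCast_nonneg _
  have hnpos : (0 : ℤ) ≤ ((m+3 : ℕ) : ℤ) := Int.natCast_nonneg _
  have hk1 : -1 ≤ k := by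
    by_contra hcon
    push_neg at hcon
    have h5 : k ≤ -2 := by omega
    have h6 : ((m+3 : ℕ) : ℤ) * k ≤ ((m+3 : ℕ) : ℤ) * (-2) := mul_le_mul_of_nonneg_left h5 hnpos
    have h7 : (2 : ℤ) ≤ ((m+3 : ℕ) : ℤ) := by exact_mod_cast (by omega : 2 ≤ m + 3)
    linarith
  have hk2 : k ≤ 1 := by
    by_contra hcon
    push_neg at hcon
    have h5 : (2 : ℤ) ≤ k := by omega
    have h6 : ((m+3 : ℕ) : ℤ) * 2 ≤ ((m+3 : ℕ) : ℤ) * k := mul_le_mul_of_nonneg_left h5 hnpos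
    have h7 : (2 : ℤ) ≤ ((m+3 : ℕ) : ℤ) := by exact_mod_cast (by omega : 2 ≤ m + 3)
    linarith
  have hcases : U.card = D.card ∨ (U.card = m + 3 ∧ D.card = 0) ∨ (D.card = m + 3 ∧ U.card = 0) := by
    interval_cases k <;> omega
  rcases hcases with hc | ⟨hc, _⟩ | ⟨hc, _⟩
  · -- balanced case
    right; right
    have eU : ∑ i ∈ U, wf σ i = 0 := by
      apply Finset.sum_eq_zero
      intro i hi
      have h1 := (hmemU i).1 hi
      have h2 : ¬ σ i = i := fun hh => hex2 i ⟨hh, h1⟩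
      simp [wf, h1, h2]
    have eD : ∑ i ∈ D, wf σ i = 2 * D.card := by
      rw [Finset.sum_congr rfl (fun i hi => ?_), Finset.sum_const, smul_eq_mul, mul_comm]
      have h1 := (hmemD i).1 hi
      have h2 : ¬ σ i = i := fun hh => hex3 i ⟨hh, h1⟩
      have h3 : ¬ σ i = i + 1 := fun hh => hex i ⟨hh, h1⟩
      simp [wf, h2, h3]
    have eF : ∑ i ∈ F, wf σ i = F.card := by
      rw [Finset.sum_congr rfl (fun i hi => ?_), Finset.sum_const, smul_eq_mul, mul_one]
      simp [wf, (hmemF i).1 hi]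
    rw [hsplit, eU, eD, eF]
    omega
  · left
    have : U = Finset.univ := Finset.eq_univ_of_card U (by rw [hc, Fintype.card_fin])
    intro i
    exact (hmemU i).1 (this ▸ Finset.mem_univ i)
  · right; left
    have : D = Finset.univ := Finset.eq_univ_of_card D (by rw [hc, Fintype.card_fin])
    intro i
    exact (hmemD i).1 (this ▸ Finset.mem_univ i)


lemma entry_eq {m : ℕ} (r c : Fin (m + 3)) :
    todaLax (m + 3) r c =
      if r = c then Polynomial.X * Polynomial.C (Polynomial.C (X (Sum.inr r)) - Polynomial.X)
      else if r = c + 1 then tA c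
      else if c = r + 1 then -Polynomial.X ^ 2
      else 0 := by
  have hr := r.isLt
  have hc := c.isLt
  have e1 : (r = c) ↔ (r : ℕ) = (c : ℕ) := Fin.ext_iff
  have e2 : (r = c + 1) ↔ ((r : ℕ) = if (c : ℕ) = m + 2 then 0 else (c : ℕ) + 1) := by
    rw [Fin.ext_iff, fin_add_one_val]
  have e3 : (c = r + 1) ↔ ((c : ℕ) = if (r : ℕ) = m + 2 then 0 else (r : ℕ) + 1) := by
    rw [Fin.ext_iff, fin_add_one_val]
  by_cases hcm : (c : ℕ) = m + 2 <;> by_cases hrm : (r : ℕ) = m + 2 <;>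
    simp only [hcm, hrm, if_true, if_false, if_pos, if_neg, not_false_iff, eq_self_iff_true] at e2 e3 <;>
    simp only [todaLax, e1, e2, e3] <;> split_ifs <;> first | rfl | omega


lemma entry_adm (σ : Equiv.Perm (Fin (m+3))) (h : Adm σ) (i : Fin (m+3)) :
    todaLax (m+3) (σ i) i = Polynomial.X ^ (wf σ i) * Polynomial.C (qf σ i) := by
  rcases h i with h1 | h1 | h1
  · have hw : wf σ i = 1 := by simp only [wf, if_pos h1]
    have hq : qf σ i = Polynomial.C (X (Sum.inr i)) - Polynomial.X := by
      simp only [qf, if_pos h1]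
    rw [entry_eq, if_pos h1, hw, hq, pow_one, h1]
  · have h2 : ¬ σ i = i := by rw [h1]; exact add_one_ne i
    have hw : wf σ i = 0 := by simp only [wf, if_neg h2, if_pos h1]
    have hq : qf σ i = Polynomial.C (X (Sum.inl i)) := by
      simp only [qf, if_neg h2, if_pos h1]
    rw [entry_eq, if_neg h2, if_pos h1, hw, hq, pow_zero, one_mul, tA]
  · have h2 : ¬ σ i = i := by
      intro hh; rw [hh] at h1; exact add_one_ne i h1.symm
    have h3 : ¬ σ i = i + 1 := by
      intro hh; rw [hh] at h1; exact add_two_ne i h1.symm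
    have hw : wf σ i = 2 := by simp only [wf, if_neg h2, if_neg h3]
    have hq : qf σ i = -1 := by simp only [qf, if_neg h2, if_neg h3]
    rw [entry_eq, if_neg h2, if_neg h3, if_pos h1, hw, hq, map_neg, map_one]
    ring

lemma prod_adm (σ : Equiv.Perm (Fin (m+3))) (h : Adm σ) :
    ∏ i, todaLax (m+3) (σ i) i =
      Polynomial.X ^ (∑ i, wf σ i) * Polynomial.C (∏ i, qf σ i) := by
  rw [Finset.prod_congr rfl (fun i _ => entry_adm σ h i), Finset.prod_mul_distrib,
    Finset.prod_pow_eq_pow_sum, map_prod]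

lemma prod_not (σ : Equiv.Perm (Fin (m+3))) (h : ¬ Adm σ) :
    ∏ i, todaLax (m+3) (σ i) i = 0 := by
  rw [Adm] at h
  push_neg at h
  obtain ⟨i, hi⟩ := h
  apply Finset.prod_eq_zero (f := fun i => todaLax (m+3) (σ i) i) (Finset.mem_univ i)
  rw [entry_eq, if_neg hi.1, if_neg hi.2.1, if_neg (fun hh => hi.2.2 hh)]

lemma rho_apply (i : Fin (m+3)) : finRotate (m+3) i = i + 1 := finRotate_succ_apply i

lemma eq_rho (σ : Equiv.Perm (Fin (m+3))) (h : ∀ i, σ i = i + 1) : σ = finRotate (m+3) :=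
  Equiv.ext fun i => by rw [h i, rho_apply]

lemma eq_rho_inv (σ : Equiv.Perm (Fin (m+3))) (h : ∀ i, i = σ i + 1) :
    σ = (finRotate (m+3))⁻¹ := by
  apply Equiv.ext
  intro i
  rw [Equiv.Perm.eq_inv_iff_eq, rho_apply, ← h i]

lemma prod_rho : ∏ i, todaLax (m+3) ((finRotate (m+3)) i) i =
    Polynomial.C (Polynomial.C (∏ i : Fin (m+3), X (Sum.inl i))) := by
  have key : ∀ i : Fin (m+3), todaLax (m+3) ((finRotate (m+3)) i) i = tA i := by
    intro i
    rw [rho_apply, entry_eq, if_neg (add_one_ne i), if_pos rfl]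
  rw [Finset.prod_congr rfl (fun i _ => key i)]
  unfold tA
  rw [← map_prod, ← map_prod]

lemma prod_rho_inv : ∏ i, todaLax (m+3) ((finRotate (m+3))⁻¹ i) i =
    (-1)^(m+3) * Polynomial.X ^ (2*(m+3)) := by
  have key : ∀ i : Fin (m+3), todaLax (m+3) ((finRotate (m+3))⁻¹ i) i = -Polynomial.X^2 := by
    intro i
    have hij : i = (finRotate (m+3))⁻¹ i + 1 := by
      rw [← rho_apply ((finRotate (m+3))⁻¹ i), Equiv.Perm.coe_inv, Equiv.apply_symm_apply]
    have h2 : ¬ (finRotate (m+3))⁻¹ i = i := by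
      intro hh; rw [hh] at hij; exact add_one_ne i hij.symm
    have h3 : ¬ (finRotate (m+3))⁻¹ i = i + 1 := by
      intro hh; rw [hh] at hij; exact add_two_ne i hij.symm
    rw [entry_eq, if_neg h2, if_neg h3, if_pos hij]
  rw [Finset.prod_congr rfl (fun i _ => key i), Finset.prod_const, Finset.card_univ,
    Fintype.card_fin]
  have h4 : (-Polynomial.X^2 : Polynomial (Polynomial (TodaS (m+3)))) = (-1) * Polynomial.X^2 := by
    ring
  rw [h4]; ring

lemma sign_rho : Equiv.Perm.sign (finRotate (m+3)) = (-1)^(m+2) := by simp [sign_finRotate]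

lemma qf_natDegree_le (σ : Equiv.Perm (Fin (m+3))) (i : Fin (m+3)) :
    (qf σ i).natDegree ≤ 1 := by
  simp only [qf]
  split_ifs
  · exact (Polynomial.natDegree_sub_le _ _).trans (by simp)
  · simp
  · simp

lemma prod_qf_natDegree_le (σ : Equiv.Perm (Fin (m+3))) :
    (∏ i, qf σ i).natDegree ≤ m + 3 := by
  refine (Polynomial.natDegree_prod_le _ _).trans ?_
  calc ∑ i, (qf σ i).natDegree ≤ ∑ _i : Fin (m+3), 1 :=
        Finset.sum_le_sum (fun i _ => qf_natDegree_le σ i)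
    _ = m + 3 := by simp

lemma qf_natDegree_eq_zero (σ : Equiv.Perm (Fin (m+3))) (i : Fin (m+3)) (h : ¬ σ i = i) :
    (qf σ i).natDegree = 0 := by
  simp only [qf, if_neg h]
  split_ifs <;> simp

lemma prod_qf_coeff_top (σ : Equiv.Perm (Fin (m+3))) (h : σ ≠ 1) :
    (∏ i, qf σ i).coeff (m+3) = 0 := by
  classical
  have hex : ∃ i₀, ¬ σ i₀ = i₀ := by
    by_contra hc
    push_neg at hc
    exact h (Equiv.ext fun i => by rw [hc i]; rfl)
  obtain ⟨i₀, hi₀⟩ := hex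
  apply Polynomial.coeff_eq_zero_of_natDegree_lt
  calc (∏ i, qf σ i).natDegree ≤ ∑ i, (qf σ i).natDegree := Polynomial.natDegree_prod_le _ _
    _ ≤ ∑ i : Fin (m+3), (if i = i₀ then 0 else 1) := Finset.sum_le_sum (fun i _ => by
        by_cases hii : i = i₀
        · subst hii
          rw [if_pos rfl, qf_natDegree_eq_zero σ i hi₀]
        · rw [if_neg hii]
          exact qf_natDegree_le σ i)
    _ < m + 3 := by
        rw [Finset.sum_eq_sum_sdiff_singleton_add (Finset.mem_univ i₀), if_pos rfl, add_zero]
        have h1 : ∑ i ∈ Finset.univ \ {i₀}, (if i = i₀ then 0 else 1)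
            = ∑ _i ∈ (Finset.univ \ {i₀} : Finset (Fin (m+3))), 1 := by
          apply Finset.sum_congr rfl
          intro i hi
          rw [if_neg (by simpa using (Finset.mem_sdiff.1 hi).2)]
        rw [h1, Finset.sum_const, smul_eq_mul, mul_one, Finset.card_sdiff_of_subset (by simp),
          Finset.card_univ, Fintype.card_fin, Finset.card_singleton]
        omega

lemma coeff_prod_diag :
    (∏ i : Fin (m+3), (Polynomial.C (X (Sum.inr i)) - Polynomial.X :
      Polynomial (TodaS (m+3)))).coeff (m+3) = (-1)^(m+3) := by
  have h1 : ∀ i : Fin (m+3), (Polynomial.C (X (Sum.inr i)) - Polynomial.X :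
      Polynomial (TodaS (m+3))) = (-1) * (Polynomial.X - Polynomial.C (X (Sum.inr i))) :=
    fun i => by ring
  rw [Finset.prod_congr rfl (fun i _ => h1 i), Finset.prod_mul_distrib, Finset.prod_const,
    Finset.card_univ, Fintype.card_fin]
  set p : Polynomial (TodaS (m+3)) := ∏ i : Fin (m+3), (Polynomial.X - Polynomial.C (X (Sum.inr i))) with hp
  have hmon : p.Monic :=
    Polynomial.monic_prod_of_monic _ _ (fun i _ => Polynomial.monic_X_sub_C _)
  have hdeg : p.natDegree = m + 3 := by
    rw [hp, Polynomial.natDegree_prod _ _ (fun i _ => (Polynomial.monic_X_sub_C _).ne_zero)]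
    simp [Polynomial.natDegree_X_sub_C]
  have hC : ((-1 : Polynomial (TodaS (m+3))) ^ (m+3)) = Polynomial.C ((-1)^(m+3)) := by
    rw [map_pow, map_neg, map_one]
  rw [hC, Polynomial.coeff_C_mul]
  have h2 := hmon.coeff_natDegree
  rw [hdeg] at h2
  rw [h2, mul_one]

end TodaAux

open TodaAux in
/-- `det L = −C² + H⁽¹⁾(λ) C + H⁽²⁾` with `C = μⁿ`,
`H⁽²⁾ = (−1)^{n+1} a_1 ⋯ a_n`, and `H⁽¹⁾(λ)` a polynomial in `λ` (coefficients
polynomial in the `a i, b i`, independent of `μ`) of the form `(−1)ⁿ λⁿ + ⋯`. -/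
theorem stmt2 (n : ℕ) (hn : 3 ≤ n) :
    ∃ H1 : Polynomial (TodaS n),
      H1.coeff n = (-1) ^ n ∧ (∀ j : ℕ, n < j → H1.coeff j = 0) ∧
      (todaLax n).det =
        -(Polynomial.X ^ n) ^ 2 + Polynomial.C H1 * Polynomial.X ^ n
          + Polynomial.C (Polynomial.C ((-1) ^ (n + 1) * ∏ i : Fin n, X (Sum.inl i))) := by
  obtain ⟨m, rfl⟩ : ∃ m, n = m + 3 := ⟨n - 3, by omega⟩
  classical
  have hρne : (finRotate (m+3)) ≠ (finRotate (m+3))⁻¹ := by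
    intro hh
    have h1 : (finRotate (m+3)) 0 = (0 : Fin (m+3)) + 1 := rho_apply 0
    have h2 : (0 : Fin (m+3)) = (finRotate (m+3))⁻¹ 0 + 1 := by
      rw [← rho_apply ((finRotate (m+3))⁻¹ 0), Equiv.Perm.coe_inv, Equiv.apply_symm_apply]
    rw [← hh, h1] at h2
    exact add_two_ne 0 h2.symm
  have hone_ne_rho : (1 : Equiv.Perm (Fin (m+3))) ≠ finRotate (m+3) := by
    intro hh
    have h1 := rho_apply (m := m) 0
    rw [← hh] at h1
    simp only [Equiv.Perm.one_apply] at h1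
    exact add_one_ne 0 h1.symm
  have hone_ne_rhoinv : (1 : Equiv.Perm (Fin (m+3))) ≠ (finRotate (m+3))⁻¹ := by
    intro hh
    exact hone_ne_rho (inv_eq_one.mp hh.symm).symm
  have hone_mem : (1 : Equiv.Perm (Fin (m+3))) ∈
      (Finset.univ \ ({finRotate (m+3), (finRotate (m+3))⁻¹} :
        Finset (Equiv.Perm (Fin (m+3))))).filter Adm := by
    rw [Finset.mem_filter, Finset.mem_sdiff]
    refine ⟨⟨Finset.mem_univ _, ?_⟩, fun i => Or.inl rfl⟩
    simp only [Finset.mem_insert, Finset.mem_singleton]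
    push_neg
    exact ⟨hone_ne_rho, hone_ne_rhoinv⟩
  refine ⟨∑ σ ∈ (Finset.univ \ ({finRotate (m+3), (finRotate (m+3))⁻¹} :
      Finset (Equiv.Perm (Fin (m+3))))).filter Adm,
      (((Equiv.Perm.sign σ : ℤ) : Polynomial (TodaS (m+3))) * ∏ i, qf σ i), ?_, ?_, ?_⟩
  · -- top coefficient
    rw [Polynomial.finset_sum_coeff]
    rw [Finset.sum_eq_single_of_mem (1 : Equiv.Perm (Fin (m+3))) hone_mem
      (fun b _ hb => by
        rw [← Polynomial.C_eq_intCast, Polynomial.coeff_C_mul, prod_qf_coeff_top b hb,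
          mul_zero])]
    have hq1 : ∀ i : Fin (m+3), qf 1 i =
        Polynomial.C (X (Sum.inr i)) - Polynomial.X := by
      intro i
      simp [qf]
    rw [← Polynomial.C_eq_intCast, Polynomial.coeff_C_mul,
      Finset.prod_congr rfl (fun i _ => hq1 i), coeff_prod_diag, Equiv.Perm.sign_one]
    simp
  · -- higher coefficients vanish
    intro j hj
    rw [Polynomial.finset_sum_coeff]
    apply Finset.sum_eq_zero
    intro σ _
    rw [← Polynomial.C_eq_intCast, Polynomial.coeff_C_mul,
      Polynomial.coeff_eq_zero_of_natDegree_lt (lt_of_le_of_lt (prod_qf_natDegree_le σ) hj),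
      mul_zero]
  · -- the determinant identity
    rw [Matrix.det_apply]
    have hsplit : (Finset.univ : Finset (Equiv.Perm (Fin (m+3)))) =
        ({finRotate (m+3), (finRotate (m+3))⁻¹} : Finset _) ∪
          (Finset.univ \ {finRotate (m+3), (finRotate (m+3))⁻¹}) := by
      rw [Finset.union_sdiff_of_subset (Finset.subset_univ _)]
    conv_lhs => rw [hsplit, Finset.sum_union Finset.disjoint_sdiff, Finset.sum_pair hρne]
    have hneg : ∀ x : Polynomial (Polynomial (TodaS (m+3))), (-1 : ℤˣ) • x = -x := by
      intro x
      have h := Units.neg_smul (1 : ℤˣ) x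
      rw [one_smul] at h
      exact h
    have hterm1 : Equiv.Perm.sign (finRotate (m+3)) •
        ∏ i, todaLax (m+3) ((finRotate (m+3)) i) i =
        Polynomial.C (Polynomial.C ((-1)^(m+3+1) * ∏ i : Fin (m+3), X (Sum.inl i))) := by
      rw [prod_rho, sign_rho]
      rcases Nat.even_or_odd (m+2) with hp | hp
      · have h1 : ((-1 : ℤˣ))^(m+2) = 1 := hp.neg_one_pow
        have h2 : ((-1 : TodaS (m+3)))^(m+3+1) = 1 := by
          rcases hp with ⟨k, hk⟩
          exact negpow_even ⟨k + 1, by omega⟩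
        rw [h1, one_smul, h2, one_mul]
      · have h1 : ((-1 : ℤˣ))^(m+2) = -1 := hp.neg_one_pow
        have h2 : ((-1 : TodaS (m+3)))^(m+3+1) = -1 := by
          rcases hp with ⟨k, hk⟩
          exact negpow_odd ⟨k + 1, by omega⟩
        rw [h1, h2, hneg, neg_one_mul, map_neg, map_neg]
    have hterm2 : Equiv.Perm.sign ((finRotate (m+3))⁻¹) •
        ∏ i, todaLax (m+3) ((finRotate (m+3))⁻¹ i) i = -(Polynomial.X^(m+3))^2 := by
      rw [Equiv.Perm.sign_inv, sign_rho, prod_rho_inv]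
      have h1 : ((Polynomial.X : Polynomial (Polynomial (TodaS (m+3))))^(m+3))^2
          = Polynomial.X^(2*(m+3)) := by rw [← pow_mul, mul_comm]
      rcases Nat.even_or_odd m with hp | hp
      · have hs : ((-1 : ℤˣ))^(m+2) = 1 := by
          refine Even.neg_one_pow ?_
          rcases hp with ⟨k, hk⟩
          exact ⟨k + 1, by omega⟩
        have h2 : ((-1 : Polynomial (Polynomial (TodaS (m+3)))))^(m+3) = -1 := by
          rcases hp with ⟨k, hk⟩
          exact negpow_odd (R := Polynomial (Polynomial (TodaS (m+3)))) (k := m+3) ⟨k + 1, by omega⟩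
        rw [hs, one_smul, h2, h1]
        ring
      · have hs : ((-1 : ℤˣ))^(m+2) = -1 := by
          refine Odd.neg_one_pow ?_
          rcases hp with ⟨k, hk⟩
          exact ⟨k + 1, by omega⟩
        have h2 : ((-1 : Polynomial (Polynomial (TodaS (m+3)))))^(m+3) = 1 := by
          rcases hp with ⟨k, hk⟩
          exact negpow_even (R := Polynomial (Polynomial (TodaS (m+3)))) (k := m+3) ⟨k + 2, by omega⟩
        rw [hs, h2, hneg, one_mul, ← h1]
    have hrest : ∑ σ ∈ Finset.univ \ ({finRotate (m+3), (finRotate (m+3))⁻¹} :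
          Finset (Equiv.Perm (Fin (m+3)))),
        (Equiv.Perm.sign σ • ∏ i, todaLax (m+3) (σ i) i) =
        Polynomial.C (∑ σ ∈ (Finset.univ \ ({finRotate (m+3), (finRotate (m+3))⁻¹} :
          Finset (Equiv.Perm (Fin (m+3))))).filter Adm,
          (((Equiv.Perm.sign σ : ℤ) : Polynomial (TodaS (m+3))) * ∏ i, qf σ i))
          * Polynomial.X^(m+3) := by
      rw [map_sum, Finset.sum_mul, Finset.sum_filter]
      apply Finset.sum_congr rfl
      intro σ hσ
      rw [Finset.mem_sdiff] at hσ
      have hσ2 : σ ≠ finRotate (m+3) ∧ σ ≠ (finRotate (m+3))⁻¹ := by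
        have := hσ.2
        simp only [Finset.mem_insert, Finset.mem_singleton] at this
        push_neg at this
        exact this
      by_cases hA : Adm σ
      · rw [if_pos hA, prod_adm σ hA]
        rcases weight_sum σ hA with hw | hw | hw
        · exact absurd (eq_rho σ hw) hσ2.1
        · exact absurd (eq_rho_inv σ hw) hσ2.2
        · rw [hw]
          rcases Int.units_eq_one_or (Equiv.Perm.sign σ) with hs | hs <;> rw [hs]
          · rw [one_smul, Units.val_one, Int.cast_one, one_mul]; ring
          · rw [hneg, Units.val_neg, Units.val_one, Int.cast_neg, Int.cast_one]
            have hstep : (-1 : Polynomial (TodaS (m+3))) * ∏ i, qf σ i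
                = -(∏ i, qf σ i) := by ring
            rw [hstep, map_neg]
            ring
      · rw [if_neg hA, prod_not σ hA, smul_zero]
    rw [hterm1, hterm2, hrest]
    ring
end

section
/- The n functions H^{(2)} = (−1)^{n+1} a_1⋯a_n and H^{(1)}_1, ..., H^{(1)}_n (the coefficients of λ^{n−1},...,λ^0 in the spectral polynomial H^{(1)}(λ) of the periodic Toda lattice) are functionally independent on (ℂ*)^n × ℂ^n; i.e., their differentials are linearly independent at a generic point. -/
open MvPolynomial

/-- `H⁽¹⁾(λ)`: the coefficient of `μⁿ` in `det L`, a polynomial in `λ` with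
coefficients in `ℂ[a,b]` (by the spectral-curve relation
`det L = −C² + H⁽¹⁾(λ) C + H⁽²⁾`, `C = μⁿ`). -/
noncomputable def todaH1 (n : ℕ) : Polynomial (TodaS n) := (todaLax n).det.coeff n

/-- The `n+1` Hamiltonians `H⁽²⁾, H⁽¹⁾_1, …, H⁽¹⁾_n` (with `H⁽¹⁾_j` the coefficient of
`λ^{n−j}` in `H⁽¹⁾(λ)`). -/
noncomputable def todaHam (n : ℕ) : Fin (n + 1) → TodaS n := fun i =>
  if i = 0 then (-1) ^ (n + 1) * ∏ k : Fin n, X (Sum.inl k)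
  else (todaH1 n).coeff (n - (i : ℕ))

noncomputable def Ia (n : ℕ) : Ideal (TodaS n) :=
  Ideal.span (Set.range fun i : Fin n => (X (Sum.inl i) : TodaS n))

noncomputable def T0 (n : ℕ) : Polynomial (TodaS n) :=
  ∏ i : Fin n, (Polynomial.C (X (Sum.inr i)) - Polynomial.X)

/-- helper: derivative of a product whose factors are all killed by pderiv -/

lemma cornerDet {R : Type*} [CommRing R] (m : ℕ) (hm : 1 ≤ m)
    (d : Fin (m+1) → R) (u : R) :
    (Matrix.det (Matrix.of fun i j => if i = j then d i else if (j:ℕ) = (i:ℕ)+1 then u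
       else if (i:ℕ) = m ∧ (j:ℕ) = 0 then u else 0) : R)
      = ∏ i, d i + (-1)^m * u^(m+1) := by
  set M : Matrix (Fin (m+1)) (Fin (m+1)) R := Matrix.of fun i j =>
    if i = j then d i else if (j:ℕ) = (i:ℕ)+1 then u
      else if (i:ℕ) = m ∧ (j:ℕ) = 0 then u else 0 with hM
  have hlast0 : (0 : Fin (m+1)) ≠ Fin.last m := by
    intro h
    have := congrArg Fin.val h
    simp only [Fin.val_zero, Fin.val_last] at this
    omega
  rw [Matrix.det_succ_column_zero]
  rw [(Finset.sum_subset (Finset.subset_univ ({0, Fin.last m} : Finset (Fin (m+1))))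
    (by
      intro i _ hi
      simp only [Finset.mem_insert, Finset.mem_singleton, not_or] at hi
      have h1 : M i 0 = 0 := by
        have hi0 : i ≠ 0 := hi.1
        have hil : (i : ℕ) ≠ m := by
          intro h
          exact hi.2 (by apply Fin.ext; rw [Fin.val_last]; exact h)
        have c2 : ¬ ((0 : Fin (m+1)) : ℕ) = (i : ℕ) + 1 := by
          simp only [Fin.val_zero]; omega
        have c3 : ¬ ((i : ℕ) = m ∧ ((0 : Fin (m+1)) : ℕ) = 0) := by
          simp only [Fin.val_zero]; omega
        simp only [hM, Matrix.of_apply]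
        rw [if_neg hi0, if_neg c2, if_neg c3]
      rw [h1]
      ring)).symm]
  rw [Finset.sum_pair hlast0]
  have hM00 : M 0 0 = d 0 := by simp [hM]
  have hMl0 : M (Fin.last m) 0 = u := by
    have c2 : ¬ ((0 : Fin (m+1)) : ℕ) = ((Fin.last m : Fin (m+1)) : ℕ) + 1 := by
      simp only [Fin.val_zero, Fin.val_last]; omega
    have c3 : ((Fin.last m : Fin (m+1)) : ℕ) = m ∧ ((0 : Fin (m+1)) : ℕ) = 0 := ⟨rfl, rfl⟩
    simp only [hM, Matrix.of_apply]
    rw [if_neg hlast0.symm, if_neg c2, if_pos c3]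
  have hminor1 : (M.submatrix (0 : Fin (m+1)).succAbove Fin.succ).det = ∏ i : Fin m, d i.succ := by
    rw [Matrix.det_of_upperTriangular]
    · apply Finset.prod_congr rfl
      intro i _
      simp [hM, Fin.succAbove_zero]
    · intro i j hij
      have hij' : (j : ℕ) < (i : ℕ) := hij
      have c1 : i.succ ≠ j.succ := by
        intro h
        have := congrArg Fin.val h
        simp only [Fin.val_succ] at this
        omega
      have c2 : ¬ ((j.succ : Fin (m+1)) : ℕ) = ((i.succ : Fin (m+1)) : ℕ) + 1 := by
        simp only [Fin.val_succ]; omega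
      have c3 : ¬ (((i.succ : Fin (m+1)) : ℕ) = m ∧ ((j.succ : Fin (m+1)) : ℕ) = 0) := by
        simp only [Fin.val_succ]; omega
      simp only [Matrix.submatrix_apply, Fin.succAbove_zero, hM, Matrix.of_apply]
      rw [if_neg c1, if_neg c2, if_neg c3]
  have hminor2 : (M.submatrix (Fin.last m).succAbove Fin.succ).det = u ^ m := by
    have key : ∀ i j : Fin m, (i : ℕ) ≤ (j : ℕ) →
        M i.castSucc j.succ = if i = j then u else 0 := by
      intro i j hij
      have c1 : i.castSucc ≠ j.succ := by
        intro h
        have := congrArg Fin.val h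
        simp only [Fin.val_succ, Fin.coe_castSucc] at this
        omega
      by_cases hij2 : i = j
      · subst hij2
        have c2 : ((i.succ : Fin (m+1)) : ℕ) = ((i.castSucc : Fin (m+1)) : ℕ) + 1 := by
          simp only [Fin.val_succ, Fin.coe_castSucc]
        simp only [hM, Matrix.of_apply]
        rw [if_neg c1, if_pos c2]; simp
      · have hij3 : (i : ℕ) < (j : ℕ) := by
          rcases Nat.lt_or_ge (i : ℕ) (j : ℕ) with h | h
          · exact h
          · exact absurd (Fin.ext (le_antisymm hij h)) hij2
        have c2 : ¬ ((j.succ : Fin (m+1)) : ℕ) = ((i.castSucc : Fin (m+1)) : ℕ) + 1 := by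
          simp only [Fin.val_succ, Fin.coe_castSucc]; omega
        have c3 : ¬ (((i.castSucc : Fin (m+1)) : ℕ) = m ∧ ((j.succ : Fin (m+1)) : ℕ) = 0) := by
          simp only [Fin.val_succ, Fin.coe_castSucc]; omega
        simp only [hM, Matrix.of_apply]
        rw [if_neg c1, if_neg c2, if_neg c3, if_neg hij2]
    have h1 : (M.submatrix (Fin.last m).succAbove Fin.succ).det = ∏ i : Fin m, u := by
      rw [Matrix.det_of_lowerTriangular]
      · apply Finset.prod_congr rfl
        intro i _
        simp only [Matrix.submatrix_apply, Fin.succAbove_last]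
        rw [key i i le_rfl, if_pos rfl]
      · intro i j hij
        have hij' : (i : ℕ) < (j : ℕ) := hij
        simp only [Matrix.submatrix_apply, Fin.succAbove_last]
        rw [key i j (le_of_lt hij'), if_neg (by intro h; rw [h] at hij'; omega)]
    rw [h1, Finset.prod_const, Finset.card_univ, Fintype.card_fin]
  rw [hM00, hMl0, hminor1, hminor2, Fin.val_last, Fin.val_zero, Fin.prod_univ_succ d]
  ring

lemma claim1 (m : ℕ) (hm : 2 ≤ m) :
    Polynomial.map (Ideal.Quotient.mk (Ia (m+1))) (todaH1 (m+1))
      = Polynomial.map (Ideal.Quotient.mk (Ia (m+1))) (T0 (m+1)) := by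
  letI : CommRing (Polynomial (TodaS (m+1) ⧸ Ia (m+1))) := Polynomial.commRing
  set π : TodaS (m+1) →+* (TodaS (m+1) ⧸ Ia (m+1)) := Ideal.Quotient.mk (Ia (m+1)) with hπ
  set πA : TodaA (m+1) →+* Polynomial (Polynomial (TodaS (m+1) ⧸ Ia (m+1))) :=
    Polynomial.mapRingHom (Polynomial.mapRingHom π) with hπA
  have hπa : ∀ i : Fin (m+1), π (X (Sum.inl i)) = 0 := fun i =>
    Ideal.Quotient.eq_zero_iff_mem.mpr (Ideal.subset_span ⟨i, rfl⟩)
  set dd : Fin (m+1) → Polynomial (Polynomial (TodaS (m+1) ⧸ Ia (m+1))) :=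
    fun i => Polynomial.X * Polynomial.C (Polynomial.C (π (X (Sum.inr i))) - Polynomial.X)
    with hdd
  set uu : Polynomial (Polynomial (TodaS (m+1) ⧸ Ia (m+1))) := -Polynomial.X^2 with huu
  have hmat : (todaLax (m+1)).map πA
      = Matrix.of (fun i j => if i = j then dd i else if (j:ℕ) = (i:ℕ)+1 then uu
          else if (i:ℕ) = m ∧ (j:ℕ) = 0 then uu else 0) := by
    apply Matrix.ext
    intro i j
    have htA : ∀ k : Fin (m+1), πA (tA k) = 0 := by
      intro k
      simp [hπA, tA, hπa k]
    simp only [Matrix.map_apply, todaLax, Matrix.of_apply, Nat.add_sub_cancel]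
    split_ifs with h1 h2 h3 h4 h5
    · simp [hπA, hdd]
    · simp [hπA, huu]
    · simp [hπA, huu]
    · exact htA j
    · exact htA j
    · exact map_zero πA
  have hdet : πA ((todaLax (m+1)).det)
      = ∏ i, dd i + (-1)^m * uu^(m+1) := by
    have hgood : πA (todaLax (m+1)).det = ((todaLax (m+1)).map πA).det := RingHom.map_det _ (todaLax (m+1))
    rw [hgood, hmat, cornerDet m (by omega)]
  -- extract coefficient m+1 (in μ)
  have hco : Polynomial.map π (todaH1 (m+1))
      = (πA ((todaLax (m+1)).det)).coeff (m+1) := by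
    rw [hπA]
    show _ = (Polynomial.map (Polynomial.mapRingHom π) _).coeff (m+1)
    rw [Polynomial.coeff_map]
    rfl
  rw [hco, hdet]
  have hprod : (∏ i, dd i : Polynomial _) = Polynomial.X^(m+1) *
      Polynomial.C (∏ i : Fin (m+1), (Polynomial.C (π (X (Sum.inr i))) - Polynomial.X)) := by
    rw [hdd, Finset.prod_mul_distrib, Finset.prod_const, Finset.card_univ, Fintype.card_fin,
      ← map_prod]
  rw [hprod, Polynomial.coeff_add]
  have h1 : (Polynomial.X ^ (m+1) * Polynomial.C
      (∏ i : Fin (m+1), (Polynomial.C (π (X (Sum.inr i))) - Polynomial.X))).coeff (m+1)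
      = ∏ i : Fin (m+1), (Polynomial.C (π (X (Sum.inr i))) - Polynomial.X) := by
    have h1' := Polynomial.coeff_X_pow_mul
      (Polynomial.C (∏ i : Fin (m+1), (Polynomial.C (π (X (Sum.inr i))) - Polynomial.X))) (m+1) 0
    rw [Polynomial.coeff_C_zero, Nat.zero_add] at h1'
    exact h1'
  have h2 : (((-1)^m * uu^(m+1) : Polynomial _)).coeff (m+1) = 0 := by
    rw [huu]
    have hh : ((-Polynomial.X^2 : Polynomial (Polynomial (TodaS (m+1) ⧸ Ia (m+1))))^(m+1))
        = (-1)^(m+1) * (Polynomial.X)^(2*(m+1)) := by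
      rw [show (-Polynomial.X^2 : Polynomial (Polynomial (TodaS (m+1) ⧸ Ia (m+1))))
        = -1 * Polynomial.X^2 by ring, mul_pow, pow_mul]
    have hodd : Odd (m + (m+1)) := ⟨m, by ring⟩
    rw [hh, ← mul_assoc, ← pow_add]
    have hneg : ((-1 : Polynomial (Polynomial (TodaS (m+1) ⧸ Ia (m+1))))^(m+(m+1))) = -1 := by
      rw [pow_add, pow_succ, ← mul_assoc, ← pow_add, ← two_mul, pow_mul]
      norm_num
    rw [hneg]
    rw [show ((-1 : Polynomial (Polynomial (TodaS (m+1) ⧸ Ia (m+1)))) * Polynomial.X ^ (2*(m+1)))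
      = -(Polynomial.X ^ (2*(m+1))) by ring]
    rw [Polynomial.coeff_neg, Polynomial.coeff_X_pow, if_neg (by omega), neg_zero]
  rw [h1, h2, add_zero]
  simp [T0, Polynomial.map_prod, Polynomial.map_sub, Polynomial.map_C, Polynomial.map_X]

lemma pderiv_prod_eq_zero {σ ι R : Type*} [CommSemiring R] [DecidableEq σ] (v : σ)
    (s : Finset ι) (f : ι → MvPolynomial σ R) (h : ∀ i ∈ s, pderiv v (f i) = 0) :
    pderiv v (∏ i ∈ s, f i) = 0 := by
  classical
  induction s using Finset.induction_on with
  | empty => simp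
  | @insert a s hni ih =>
      rw [Finset.prod_insert hni, pderiv_mul, h a (Finset.mem_insert_self a s),
        ih (fun i hi => h i (Finset.mem_insert_of_mem hi))]
      ring

lemma pderiv_prod_single {σ ι R : Type*} [CommSemiring R] [DecidableEq σ] [DecidableEq ι]
    (v : σ) (s : Finset ι) (k : ι) (hk : k ∈ s) (f : ι → MvPolynomial σ R)
    (h : ∀ i ∈ s, i ≠ k → pderiv v (f i) = 0) (hfk : pderiv v (f k) = 1) :
    pderiv v (∏ i ∈ s, f i) = ∏ i ∈ s.erase k, f i := by
  rw [← Finset.mul_prod_erase s f hk, pderiv_mul, hfk, one_mul,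
    pderiv_prod_eq_zero v _ f (fun i hi => h i (Finset.mem_of_mem_erase hi)
      (Finset.ne_of_mem_erase hi))]
  ring

lemma Ia_pderiv {n : ℕ} (k : Fin n) {x : TodaS n} (hx : x ∈ Ia n) :
    pderiv (Sum.inr k) x ∈ Ia n := by
  refine (Submodule.span_induction (p := fun y _ => pderiv (Sum.inr k) y ∈ Ia n ∧ y ∈ Ia n)
    ?_ ?_ ?_ ?_ hx).1
  · rintro y ⟨i, rfl⟩
    constructor
    · rw [pderiv_X_of_ne (by simp)]
      exact Ideal.zero_mem _
    · exact Ideal.subset_span ⟨i, rfl⟩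
  · simp only [map_zero]
    exact ⟨Ideal.zero_mem _, Ideal.zero_mem _⟩
  · intro a b _ _ ha hb
    rw [map_add]
    exact ⟨Ideal.add_mem _ ha.1 hb.1, Ideal.add_mem _ ha.2 hb.2⟩
  · intro a y _ hy
    rw [smul_eq_mul, pderiv_mul]
    constructor
    · exact Ideal.add_mem _ (Ideal.mul_mem_left _ _ hy.2) (Ideal.mul_mem_left _ _ hy.1)
    · exact Ideal.mul_mem_left _ _ hy.2

lemma Ia_eval {n : ℕ} (q : (Fin n ⊕ Fin n) → ℂ) (hq : ∀ i, q (Sum.inl i) = 0)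
    {x : TodaS n} (hx : x ∈ Ia n) : eval q x = 0 := by
  have h : Ia n ≤ RingHom.ker (eval q : TodaS n →+* ℂ) := by
    rw [Ia, Ideal.span_le]
    rintro y ⟨i, rfl⟩
    simp [RingHom.mem_ker, hq i]
  exact h hx

lemma coeffEq (m : ℕ) (hm : 2 ≤ m) (k : Fin (m+1)) (e : ℕ)
    (q : (Fin (m+1) ⊕ Fin (m+1)) → ℂ) (hq : ∀ i, q (Sum.inl i) = 0) :
    eval q (pderiv (Sum.inr k) ((todaH1 (m+1)).coeff e))
      = eval q (pderiv (Sum.inr k) ((T0 (m+1)).coeff e)) := by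
  have h1 : (todaH1 (m+1)).coeff e - (T0 (m+1)).coeff e ∈ Ia (m+1) := by
    rw [← Ideal.Quotient.mk_eq_mk_iff_sub_mem]
    have h2 := congrArg (fun p => Polynomial.coeff p e) (claim1 m hm)
    simpa only [Polynomial.coeff_map] using h2
  have h3 := Ia_eval q hq (Ia_pderiv k h1)
  rw [map_sub, map_sub, sub_eq_zero] at h3
  exact h3

lemma T0_coeff_top (m : ℕ) :
    (T0 (m+1)).coeff (m+1) = C ((-1 : ℂ)^(m+1)) := by
  have hfac : ∀ i : Fin (m+1),
      (Polynomial.C (X (Sum.inr i) : TodaS (m+1)) - Polynomial.X)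
        = Polynomial.C (-1 : TodaS (m+1)) * (Polynomial.X - Polynomial.C (X (Sum.inr i))) := by
    intro i
    rw [map_neg, map_one]
    ring
  have hT : T0 (m+1) = ((Polynomial.C ((-1 : TodaS (m+1))))^(m+1)) *
      ∏ i : Fin (m+1), (Polynomial.X - Polynomial.C (X (Sum.inr i) : TodaS (m+1))) := by
    rw [T0, Finset.prod_congr rfl (fun i _ => hfac i), Finset.prod_mul_distrib,
      Finset.prod_const, Finset.card_univ, Fintype.card_fin]
  have hmon : Polynomial.Monic (∏ i : Fin (m+1),
      (Polynomial.X - Polynomial.C (X (Sum.inr i) : TodaS (m+1)))) :=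
    Polynomial.monic_prod_of_monic _ _ (fun i _ => Polynomial.monic_X_sub_C _)
  have hdeg : (∏ i : Fin (m+1),
      (Polynomial.X - Polynomial.C (X (Sum.inr i) : TodaS (m+1)))).natDegree = m+1 := by
    rw [Polynomial.natDegree_prod_of_monic _ _ (fun i _ => Polynomial.monic_X_sub_C _)]
    simp [Polynomial.natDegree_X_sub_C]
  have hlead : (∏ i : Fin (m+1),
      (Polynomial.X - Polynomial.C (X (Sum.inr i) : TodaS (m+1)))).coeff (m+1) = 1 := by
    have h := hmon.coeff_natDegree
    rwa [hdeg] at h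
  rw [hT, ← map_pow, Polynomial.coeff_C_mul, hlead, mul_one]
  rw [show ((-1 : TodaS (m+1)))^(m+1) = C ((-1 : ℂ)^(m+1)) by rw [map_pow, map_neg, map_one]]

lemma T0_natDegree_lt (m : ℕ) : (T0 (m+1)).natDegree < m+2 := by
  have h := Polynomial.natDegree_prod_le (Finset.univ : Finset (Fin (m+1)))
    (fun i => Polynomial.C (X (Sum.inr i) : TodaS (m+1)) - Polynomial.X)
  have h2 : ∀ i : Fin (m+1),
      (Polynomial.C (X (Sum.inr i) : TodaS (m+1)) - Polynomial.X).natDegree = 1 := by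
    intro i
    rw [show Polynomial.C (X (Sum.inr i) : TodaS (m+1)) - Polynomial.X
      = -(Polynomial.X - Polynomial.C (X (Sum.inr i))) by ring, Polynomial.natDegree_neg,
      Polynomial.natDegree_X_sub_C]
  calc (T0 (m+1)).natDegree ≤ _ := h
  _ < m + 2 := by simp [h2]

/-- the evaluation point used for generic independence of the b-block -/
noncomputable def Q (m : ℕ) : (Fin (m+1) ⊕ Fin (m+1)) → ℂ :=
  Sum.elim (fun _ => 0) (fun i => ((i:ℕ):ℂ))

lemma keySum (m : ℕ) (hm : 2 ≤ m) (k : Fin (m+1)) (x : ℂ) :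
    ∑ j : Fin (m+1),
        eval (Q m) (pderiv (Sum.inr k) ((todaH1 (m+1)).coeff ((m+1) - ((j:ℕ)+1))))
          * x ^ ((m+1) - ((j:ℕ)+1))
      = ∏ i ∈ Finset.univ.erase k, (((i:ℕ):ℂ) - x) := by
  have hq : ∀ i, Q m (Sum.inl i) = 0 := fun i => rfl
  -- replace todaH1 by T0
  have step0 : ∀ j : Fin (m+1),
      eval (Q m) (pderiv (Sum.inr k) ((todaH1 (m+1)).coeff ((m+1) - ((j:ℕ)+1))))
        * x ^ ((m+1) - ((j:ℕ)+1))
      = eval (Q m) (pderiv (Sum.inr k) ((T0 (m+1)).coeff ((m+1) - ((j:ℕ)+1))))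
        * x ^ ((m+1) - ((j:ℕ)+1)) := by
    intro j
    rw [coeffEq m hm k _ (Q m) hq]
  rw [Finset.sum_congr rfl (fun j _ => step0 j)]
  -- reindex over range (m+1)
  have step1 : ∑ j : Fin (m+1),
      eval (Q m) (pderiv (Sum.inr k) ((T0 (m+1)).coeff ((m+1) - ((j:ℕ)+1))))
        * x ^ ((m+1) - ((j:ℕ)+1))
      = ∑ e ∈ Finset.range (m+1),
        eval (Q m) (pderiv (Sum.inr k) ((T0 (m+1)).coeff e)) * x ^ e := by
    rw [← Fin.sum_univ_eq_sum_range (fun e =>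
      eval (Q m) (pderiv (Sum.inr k) ((T0 (m+1)).coeff e)) * x ^ e) (m+1)]
    apply Fintype.sum_bijective (Fin.rev) (Fin.rev_bijective)
    intro j
    congr 2 <;> rw [Fin.val_rev] <;> omega
  rw [step1]
  -- pull the sum inside
  have step2 : ∀ e : ℕ,
      eval (Q m) (pderiv (Sum.inr k) ((T0 (m+1)).coeff e)) * x ^ e
      = eval (Q m) (pderiv (Sum.inr k) (C (x^e) * (T0 (m+1)).coeff e)) := by
    intro e
    rw [pderiv_C_mul, map_mul, eval_C]
    ring
  rw [Finset.sum_congr rfl (fun e _ => step2 e), ← map_sum, ← map_sum]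
  -- identify the inner sum with an evaluation of T0 minus its top coefficient
  have step4 : ∑ e ∈ Finset.range (m+1), C (x^e) * (T0 (m+1)).coeff e
      = Polynomial.eval (C x) (T0 (m+1)) - C (x^(m+1)) * (T0 (m+1)).coeff (m+1) := by
    have hterm : ∀ e : ℕ, (T0 (m+1)).coeff e * (C x : TodaS (m+1))^e
        = C (x^e) * (T0 (m+1)).coeff e := by
      intro e
      rw [← map_pow]
      ring
    have hev : Polynomial.eval (C x) (T0 (m+1))
        = ∑ e ∈ Finset.range (m+2), C (x^e) * (T0 (m+1)).coeff e := by
      rw [Polynomial.eval_eq_sum_range' (T0_natDegree_lt m) (C x)]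
      exact Finset.sum_congr rfl (fun e _ => hterm e)
    rw [hev, Finset.sum_range_succ (fun e => (C (x^e) : TodaS (m+1)) * (T0 (m+1)).coeff e) (m+1)]
    ring
  rw [step4, map_sub, map_sub]
  have step5 : eval (Q m) (pderiv (Sum.inr k) (C (x^(m+1)) * (T0 (m+1)).coeff (m+1))) = 0 := by
    rw [T0_coeff_top m, ← map_mul, pderiv_C, map_zero]
  rw [step5, sub_zero]
  have step6 : Polynomial.eval (C x) (T0 (m+1))
      = ∏ i : Fin (m+1), ((X (Sum.inr i) : TodaS (m+1)) - C x) := by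
    rw [T0, Polynomial.eval_prod]
    apply Finset.prod_congr rfl
    intro i _
    rw [Polynomial.eval_sub, Polynomial.eval_C, Polynomial.eval_X]
  rw [step6]
  rw [pderiv_prod_single (Sum.inr k) Finset.univ k (Finset.mem_univ k) _
    (fun i _ hik => by rw [map_sub, pderiv_C, pderiv_X_of_ne (by simp [hik]), sub_zero])
    (by rw [map_sub, pderiv_C, pderiv_X_self, sub_zero])]
  rw [map_prod]
  apply Finset.prod_congr rfl
  intro i _
  rw [map_sub, eval_X, eval_C]
  rfl

lemma H2_eq (m : ℕ) : todaHam (m+1) 0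
    = C ((-1:ℂ)^(m+1+1)) * ∏ k : Fin (m+1), X (Sum.inl k) := by
  rw [todaHam, if_pos rfl, map_pow, map_neg, map_one]

lemma H2_pderiv_inr (m : ℕ) (k : Fin (m+1)) :
    pderiv (Sum.inr k) (todaHam (m+1) 0) = 0 := by
  rw [H2_eq, pderiv_C_mul,
    pderiv_prod_eq_zero _ _ _ (fun i _ => pderiv_X_of_ne (by simp)), mul_zero]

lemma H2_pderiv_inl0 (m : ℕ) :
    pderiv (Sum.inl (0 : Fin (m+1))) (todaHam (m+1) 0)
      = C ((-1:ℂ)^(m+1+1)) * ∏ i ∈ Finset.univ.erase (0 : Fin (m+1)), X (Sum.inl i) := by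
  rw [H2_eq, pderiv_C_mul,
    pderiv_prod_single _ _ 0 (Finset.mem_univ _) _
      (fun i _ hik => pderiv_X_of_ne (by simp [hik])) (pderiv_X_self _)]

lemma H2_pderiv_inl0_ne (m : ℕ) :
    pderiv (Sum.inl (0 : Fin (m+1))) (todaHam (m+1) 0) ≠ 0 := by
  rw [H2_pderiv_inl0]
  intro h0
  have h1 := congrArg (eval (fun _ => (1:ℂ))) h0
  rw [map_mul, eval_C, map_prod, map_zero] at h1
  simp only [eval_X, Finset.prod_const_one, mul_one] at h1
  exact pow_ne_zero _ (neg_ne_zero.mpr one_ne_zero) h1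

/-- the `n+1` functions `H⁽²⁾, H⁽¹⁾_1, …, H⁽¹⁾_n` are functionally
independent on `(ℂ*)ⁿ × ℂⁿ`: at a (generic) point `p` with all `a`-coordinates
nonzero, their differentials (gradient covectors) are linearly independent. -/
theorem stmt5 (n : ℕ) (hn : 3 ≤ n) :
    ∃ p : (Fin n ⊕ Fin n) → ℂ,
      (∀ i : Fin n, p (Sum.inl i) ≠ 0) ∧
      LinearIndependent ℂ
        (fun i : Fin (n + 1) => fun v : Fin n ⊕ Fin n =>
          eval p (pderiv v (todaHam n i))) := by
  obtain ⟨m, rfl⟩ : ∃ m, n = m + 1 := ⟨n - 1, by omega⟩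
  have hm : 2 ≤ m := by omega
  set col : Fin (m+2) → (Fin (m+1) ⊕ Fin (m+1)) :=
    Fin.cases (Sum.inl 0) (fun j => Sum.inr j) with hcol
  set Mf : Matrix (Fin (m+2)) (Fin (m+2)) (TodaS (m+1)) :=
    Matrix.of (fun i c => pderiv (col c) (todaHam (m+1) i)) with hMf
  set B : Matrix (Fin (m+1)) (Fin (m+1)) (TodaS (m+1)) :=
    Matrix.of (fun j k => pderiv (Sum.inr k) (todaHam (m+1) j.succ)) with hB
  -- the B-block rows are exactly the coefficient Hamiltonians
  have hBjk : ∀ j k : Fin (m+1),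
      B j k = pderiv (Sum.inr k) ((todaH1 (m+1)).coeff ((m+1) - ((j:ℕ)+1))) := by
    intro j k
    simp only [hB, Matrix.of_apply, todaHam, if_neg (Fin.succ_ne_zero j), Fin.val_succ]
  -- determinant factorization
  have hD : Mf.det = Mf 0 0 * B.det := by
    rw [Matrix.det_succ_row_zero]
    rw [Finset.sum_eq_single 0]
    · have hsub : Mf.submatrix Fin.succ (Fin.succAbove 0) = B := by
        apply Matrix.ext
        intro j k
        simp only [Matrix.submatrix_apply, Fin.succAbove_zero, hMf, Matrix.of_apply, hB]
        congr 1
      rw [hsub]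
      simp
    · intro c _ hc
      obtain ⟨c', rfl⟩ := Fin.exists_succ_eq_of_ne_zero hc
      have h0 : Mf 0 c'.succ = 0 := by
        simp only [hMf, Matrix.of_apply, hcol, Fin.cases_succ]
        exact H2_pderiv_inr m c'
      rw [h0]
      ring
    · intro h
      exact absurd (Finset.mem_univ 0) h
  -- B.det is nonzero: evaluate at Q m and diagonalize against a Vandermonde-type matrix
  have hBevalne : eval (Q m) B.det ≠ 0 := by
    have hmapdet : eval (Q m) B.det = (B.map (eval (Q m))).det := RingHom.map_det _ B
    set Jm : Matrix (Fin (m+1)) (Fin (m+1)) ℂ := B.map (eval (Q m)) with hJm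
    set W : Matrix (Fin (m+1)) (Fin (m+1)) ℂ :=
      Matrix.of (fun j c => ((c:ℕ):ℂ)^((m+1) - ((j:ℕ)+1))) with hW
    have hdiag : Jm.transpose * W = Matrix.diagonal
        (fun k : Fin (m+1) => ∏ i ∈ Finset.univ.erase k, (((i:ℕ):ℂ) - ((k:ℕ):ℂ))) := by
      apply Matrix.ext
      intro k c
      rw [Matrix.mul_apply]
      have hsum : ∑ j, Jm.transpose k j * W j c
          = ∏ i ∈ Finset.univ.erase k, (((i:ℕ):ℂ) - ((c:ℕ):ℂ)) := by
        rw [← keySum m hm k ((c:ℕ):ℂ)]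
        apply Finset.sum_congr rfl
        intro j _
        rw [Matrix.transpose_apply, hJm, Matrix.map_apply, hBjk j k, hW]
        rfl
      rw [hsum]
      by_cases hkc : k = c
      · subst hkc
        rw [Matrix.diagonal_apply_eq]
      · rw [Matrix.diagonal_apply_ne _ hkc]
        apply Finset.prod_eq_zero (i := c)
        · exact Finset.mem_erase.mpr ⟨fun h => hkc h.symm, Finset.mem_univ c⟩
        · ring
    have hdgne : ∀ k : Fin (m+1),
        (∏ i ∈ Finset.univ.erase k, (((i:ℕ):ℂ) - ((k:ℕ):ℂ))) ≠ 0 := by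
      intro k
      apply Finset.prod_ne_zero_iff.mpr
      intro i hi
      have hik : i ≠ k := Finset.ne_of_mem_erase hi
      have : ((i:ℕ):ℂ) ≠ ((k:ℕ):ℂ) := by
        intro h
        exact hik (Fin.ext (Nat.cast_injective h))
      exact sub_ne_zero.mpr this
    have h1 : Jm.transpose.det * W.det ≠ 0 := by
      rw [← Matrix.det_mul, hdiag, Matrix.det_diagonal]
      exact Finset.prod_ne_zero_iff.mpr (fun k _ => hdgne k)
    have h2 : Jm.det ≠ 0 := by
      rw [← Matrix.det_transpose]
      exact left_ne_zero_of_mul h1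
    rw [hmapdet]
    exact h2
  have hBne : B.det ≠ 0 := by
    intro h
    rw [h, map_zero] at hBevalne
    exact hBevalne rfl
  have hMf00ne : Mf 0 0 ≠ 0 := by
    have : Mf 0 0 = pderiv (Sum.inl (0 : Fin (m+1))) (todaHam (m+1) 0) := by
      simp only [hMf, Matrix.of_apply, hcol, Fin.cases_zero]
    rw [this]
    exact H2_pderiv_inl0_ne m
  have hDne : Mf.det ≠ 0 := by
    rw [hD]
    exact mul_ne_zero hMf00ne hBne
  -- choose a generic point
  have hbig : Mf.det * ∏ i : Fin (m+1), (X (Sum.inl i) : TodaS (m+1)) ≠ 0 :=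
    mul_ne_zero hDne (Finset.prod_ne_zero_iff.mpr (fun i _ => MvPolynomial.X_ne_zero _))
  have hex : ∃ p : (Fin (m+1) ⊕ Fin (m+1)) → ℂ,
      eval p (Mf.det * ∏ i : Fin (m+1), (X (Sum.inl i) : TodaS (m+1))) ≠ 0 := by
    by_contra hco
    push_neg at hco
    exact hbig (MvPolynomial.funext (fun x => by rw [hco x, map_zero]))
  obtain ⟨p, hp⟩ := hex
  rw [map_mul, map_prod] at hp
  have hpa : ∀ i : Fin (m+1), p (Sum.inl i) ≠ 0 := by
    intro i hzero
    apply hp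
    apply mul_eq_zero_of_right
    apply Finset.prod_eq_zero (Finset.mem_univ i)
    rw [eval_X, hzero]
  have hpD : eval p Mf.det ≠ 0 := left_ne_zero_of_mul hp
  refine ⟨p, hpa, ?_⟩
  rw [Fintype.linearIndependent_iff]
  intro g hg
  have hvec : Matrix.vecMul g (Mf.map (eval p)) = 0 := by
    funext c
    have h1 := congrFun hg (col c)
    simp only [Finset.sum_apply, Pi.smul_apply, smul_eq_mul, Pi.zero_apply] at h1
    simpa [Matrix.vecMul, dotProduct, hMf] using h1
  have hdet2 : (Mf.map (eval p)).det ≠ 0 := by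
    have hmm : eval p Mf.det = (Mf.map (eval p)).det := RingHom.map_det _ Mf
    rw [← hmm]
    exact hpD
  have hz := Matrix.eq_zero_of_vecMul_eq_zero hdet2 hvec
  exact fun i => congrFun hz i
end

section
/- For the periodic Toda Poisson pencil P_λ, the vector field Z_2 = (a_1⋯a_{n−1})^{−1} ∂/∂a_n satisfies Lie_{Z_2}(P_λ) = Z_1 ∧ Y_{2,1}, where Z_1 = ∂/∂b_n and Y_{2,1} = −(a_1⋯a_{n−1})^{−1} ∂/∂b_1. -/
open MvPolynomial

/-- Phase space of the `n`-particle periodic Toda lattice: points assign a complex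
value to each coordinate `a k` (`Sum.inl k`) and `b k` (`Sum.inr k`). -/
abbrev TodaPt (n : ℕ) := (ZMod n ⊕ ZMod n) → ℂ

/-- Partial derivative of a function along the coordinate `v`. -/
noncomputable def Dv (n : ℕ) [NeZero n] (v : ZMod n ⊕ ZMod n)
    (f : TodaPt n → ℂ) (p : TodaPt n) : ℂ :=
  fderiv ℂ f p (Pi.single v 1)

/-- Components of the bivector `P_λ` as functions on phase space:
`{aₖ,a_{k+1}} = −aₖa_{k+1}`, `{aₖ,bₖ} = −aₖ(bₖ−λ)`, `{aₖ,b_{k+1}} = aₖ(b_{k+1}−λ)`,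
`{bₖ,b_{k+1}} = −aₖ` (indices mod `n`). -/
noncomputable def todaPfun (n : ℕ) (lam : ℂ) :
    (ZMod n ⊕ ZMod n) → (ZMod n ⊕ ZMod n) → TodaPt n → ℂ
  | Sum.inl k, Sum.inl l => fun p =>
      if l = k + 1 then -(p (Sum.inl k) * p (Sum.inl l))
      else if k = l + 1 then p (Sum.inl l) * p (Sum.inl k) else 0
  | Sum.inl k, Sum.inr l => fun p =>
      if l = k then -(p (Sum.inl k) * (p (Sum.inr k) - lam))
      else if l = k + 1 then p (Sum.inl k) * (p (Sum.inr l) - lam) else 0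
  | Sum.inr k, Sum.inl l => fun p =>
      if k = l then p (Sum.inl l) * (p (Sum.inr l) - lam)
      else if k = l + 1 then -(p (Sum.inl l) * (p (Sum.inr k) - lam)) else 0
  | Sum.inr k, Sum.inr l => fun p =>
      if l = k + 1 then -p (Sum.inl k)
      else if k = l + 1 then p (Sum.inl l) else 0

/-- `{f,g}_λ = ∑_{u,v} P_λ^{uv} ∂ᵤf ∂ᵥg` as a function on phase space. -/
noncomputable def todaBr (n : ℕ) [NeZero n] (lam : ℂ) (f g : TodaPt n → ℂ)
    (p : TodaPt n) : ℂ :=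
  ∑ u : ZMod n ⊕ ZMod n, ∑ v : ZMod n ⊕ ZMod n,
    todaPfun n lam u v p * Dv n u f p * Dv n v g p

/-- `Z₁ = ∂/∂b_n` (label `n ≡ 0`). -/
noncomputable def Z1f (n : ℕ) [NeZero n] (f : TodaPt n → ℂ) (p : TodaPt n) : ℂ :=
  Dv n (Sum.inr 0) f p

/-- `Z₂ = (a₁⋯a_{n−1})⁻¹ ∂/∂a_n`, with `a_n` the coordinate `Sum.inl 0` and
`a₁,…,a_{n−1}` the coordinates `Sum.inl k`, `k ≠ 0`. -/
noncomputable def Z2f (n : ℕ) [NeZero n] (f : TodaPt n → ℂ) (p : TodaPt n) : ℂ :=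
  (∏ k ∈ Finset.univ.erase (0 : ZMod n), p (Sum.inl k))⁻¹ * Dv n (Sum.inl 0) f p

/-- `Y_{2,1} = −(a₁⋯a_{n−1})⁻¹ ∂/∂b₁`. -/
noncomputable def Y21f (n : ℕ) [NeZero n] (f : TodaPt n → ℂ) (p : TodaPt n) : ℂ :=
  -(∏ k ∈ Finset.univ.erase (0 : ZMod n), p (Sum.inl k))⁻¹ * Dv n (Sum.inr 1) f p

noncomputable def prj {n : ℕ} (w : ZMod n ⊕ ZMod n) : TodaPt n →L[ℂ] ℂ :=
  ContinuousLinearMap.proj w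

noncomputable def dlt (n : ℕ) (j : ZMod n) : ℂ := if j = 0 then 1 else 0

noncomputable def Pder0 (n : ℕ) (lam : ℂ) :
    (ZMod n ⊕ ZMod n) → (ZMod n ⊕ ZMod n) → TodaPt n → ℂ
  | Sum.inl k, Sum.inl l => fun p =>
      if l = k + 1 then -(dlt n k * p (Sum.inl l) + p (Sum.inl k) * dlt n l)
      else if k = l + 1 then dlt n l * p (Sum.inl k) + p (Sum.inl l) * dlt n k else 0
  | Sum.inl k, Sum.inr l => fun p =>
      if l = k then -(dlt n k * (p (Sum.inr k) - lam))
      else if l = k + 1 then dlt n k * (p (Sum.inr l) - lam) else 0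
  | Sum.inr k, Sum.inl l => fun p =>
      if k = l then dlt n l * (p (Sum.inr l) - lam)
      else if k = l + 1 then -(dlt n l * (p (Sum.inr k) - lam)) else 0
  | Sum.inr k, Sum.inr l => fun _ =>
      if l = k + 1 then -dlt n k
      else if k = l + 1 then dlt n l else 0

section
variable {n : ℕ} [NeZero n]

lemma coord_hasFDerivAt (w : ZMod n ⊕ ZMod n) (p : TodaPt n) :
    HasFDerivAt (fun r : TodaPt n => r w) (prj w) p :=
  (prj w).hasFDerivAt

lemma coord_diff (w : ZMod n ⊕ ZMod n) (q : TodaPt n) :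
    DifferentiableAt ℂ (fun r : TodaPt n => r w) q :=
  (coord_hasFDerivAt w q).differentiableAt

omit [NeZero n] in
lemma prj_single (w u : ZMod n ⊕ ZMod n) :
    prj w (Pi.single u (1:ℂ)) = if w = u then 1 else 0 := by
  simp [prj, Pi.single_apply]

lemma sh_mul (x y : ZMod n ⊕ ZMod n) (p : TodaPt n) :
    HasFDerivAt (fun q : TodaPt n => q x * q y) (p x • prj y + p y • prj x) p :=
  (coord_hasFDerivAt x p).mul (coord_hasFDerivAt y p)

lemma sh_mulc (x y : ZMod n ⊕ ZMod n) (lam : ℂ) (p : TodaPt n) :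
    HasFDerivAt (fun q : TodaPt n => q x * (q y - lam))
      (p x • prj y + (p y - lam) • prj x) p :=
  (coord_hasFDerivAt x p).mul ((coord_hasFDerivAt y p).sub_const lam)

lemma P_diff (lam : ℂ) (u v : ZMod n ⊕ ZMod n) (q : TodaPt n) :
    DifferentiableAt ℂ (todaPfun n lam u v) q := by
  rcases u with k | k <;> rcases v with l | l <;> simp only [todaPfun] <;> split_ifs <;>
    first
      | exact differentiableAt_const 0
      | exact ((coord_diff _ q).mul (coord_diff _ q)).neg
      | exact (coord_diff _ q).mul (coord_diff _ q)
      | exact ((coord_diff _ q).mul ((coord_diff _ q).sub_const lam)).neg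
      | exact (coord_diff _ q).mul ((coord_diff _ q).sub_const lam)
      | exact (coord_diff _ q).neg
      | exact coord_diff _ q


lemma P_dv0 (lam : ℂ) (u v : ZMod n ⊕ ZMod n) (p : TodaPt n) :
    fderiv ℂ (todaPfun n lam u v) p (Pi.single (Sum.inl 0) 1) = Pder0 n lam u v p := by
  have evl : ∀ (L : TodaPt n →L[ℂ] ℂ) (φ : TodaPt n → ℂ) (c : ℂ),
      HasFDerivAt φ L p → L (Pi.single (Sum.inl 0) 1) = c →
      fderiv ℂ φ p (Pi.single (Sum.inl 0) 1) = c := fun L φ c h hc => by rw [h.fderiv, hc]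
  rcases u with k | k <;> rcases v with l | l <;> simp only [todaPfun, Pder0] <;> split_ifs
  · refine evl _ _ _ ((sh_mul (Sum.inl k) (Sum.inl l) p).neg) ?_
    simp only [ContinuousLinearMap.neg_apply, ContinuousLinearMap.add_apply,
      ContinuousLinearMap.coe_smul', Pi.smul_apply, smul_eq_mul, prj_single, dlt,
      Sum.inl.injEq]
    all_goals first | (split_ifs <;> ring) | ring
  · refine evl _ _ _ (sh_mul (Sum.inl l) (Sum.inl k) p) ?_
    simp only [ContinuousLinearMap.add_apply, ContinuousLinearMap.coe_smul',
      Pi.smul_apply, smul_eq_mul, prj_single, dlt, Sum.inl.injEq]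
    all_goals first | (split_ifs <;> ring) | ring
  · simp
  · refine evl _ _ _ ((sh_mulc (Sum.inl k) (Sum.inr k) lam p).neg) ?_
    simp only [ContinuousLinearMap.neg_apply, ContinuousLinearMap.add_apply,
      ContinuousLinearMap.coe_smul', Pi.smul_apply, smul_eq_mul, prj_single, dlt,
      Sum.inl.injEq, reduceCtorEq, if_false]
    all_goals first | (split_ifs <;> ring) | ring
  · refine evl _ _ _ (sh_mulc (Sum.inl k) (Sum.inr l) lam p) ?_
    simp only [ContinuousLinearMap.add_apply, ContinuousLinearMap.coe_smul',
      Pi.smul_apply, smul_eq_mul, prj_single, dlt, Sum.inl.injEq, reduceCtorEq, if_false]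
    all_goals first | (split_ifs <;> ring) | ring
  · simp
  · refine evl _ _ _ (sh_mulc (Sum.inl l) (Sum.inr l) lam p) ?_
    simp only [ContinuousLinearMap.add_apply, ContinuousLinearMap.coe_smul',
      Pi.smul_apply, smul_eq_mul, prj_single, dlt, Sum.inl.injEq, reduceCtorEq, if_false]
    all_goals first | (split_ifs <;> ring) | ring
  · refine evl _ _ _ ((sh_mulc (Sum.inl l) (Sum.inr k) lam p).neg) ?_
    simp only [ContinuousLinearMap.neg_apply, ContinuousLinearMap.add_apply,
      ContinuousLinearMap.coe_smul', Pi.smul_apply, smul_eq_mul, prj_single, dlt,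
      Sum.inl.injEq, reduceCtorEq, if_false]
    all_goals first | (split_ifs <;> ring) | ring
  · simp
  · refine evl _ _ _ ((coord_hasFDerivAt (Sum.inl k) p).neg) ?_
    simp only [ContinuousLinearMap.neg_apply, prj_single, dlt, Sum.inl.injEq]
    all_goals first | (split_ifs <;> ring) | ring
  · refine evl _ _ _ (coord_hasFDerivAt (Sum.inl l) p) ?_
    simp only [prj_single, dlt, Sum.inl.injEq]
    all_goals first | (split_ifs <;> ring) | ring
  · simp


-- second derivative lemmas
lemma dv_hasFDerivAt {f : TodaPt n → ℂ} (hf : ContDiff ℂ 2 f) (u : ZMod n ⊕ ZMod n)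
    (q : TodaPt n) :
    HasFDerivAt (Dv n u f) ((fderiv ℂ (fderiv ℂ f) q).flip (Pi.single u 1)) q := by
  have h1 : DifferentiableAt ℂ (fderiv ℂ f) q :=
    (hf.fderiv_right (m := 1) (by norm_num)).differentiable one_ne_zero q
  have h := h1.hasFDerivAt.clm_apply (hasFDerivAt_const (Pi.single u (1:ℂ)) q)
  simp at h
  exact h

lemma dv_diff {f : TodaPt n → ℂ} (hf : ContDiff ℂ 2 f) (u : ZMod n ⊕ ZMod n)
    (q : TodaPt n) : DifferentiableAt ℂ (Dv n u f) q :=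
  (dv_hasFDerivAt hf u q).differentiableAt

lemma dv_symm {f : TodaPt n → ℂ} (hf : ContDiff ℂ 2 f) (u w : ZMod n ⊕ ZMod n)
    (p : TodaPt n) :
    fderiv ℂ (Dv n u f) p (Pi.single w 1) = fderiv ℂ (Dv n w f) p (Pi.single u 1) := by
  rw [(dv_hasFDerivAt hf u p).fderiv, (dv_hasFDerivAt hf w p).fderiv]
  simp only [ContinuousLinearMap.flip_apply]
  exact (hf.contDiffAt.isSymmSndFDerivAt (by simp)) _ _

end

-- the product A = a_1 ... a_{n-1}
noncomputable def Apf (n : ℕ) [NeZero n] (q : TodaPt n) : ℂ :=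
  ∏ k ∈ Finset.univ.erase (0 : ZMod n), q (Sum.inl k)

noncomputable def dAf (n : ℕ) [NeZero n] (p : TodaPt n) : (ZMod n ⊕ ZMod n) → ℂ
  | Sum.inl j => if j = 0 then 0
      else ∏ k ∈ (Finset.univ.erase (0 : ZMod n)).erase j, p (Sum.inl k)
  | Sum.inr _ => 0

section
variable {n : ℕ} [NeZero n]

lemma A_hasFDerivAt (p : TodaPt n) :
    HasFDerivAt (Apf n)
      (∑ j ∈ Finset.univ.erase (0 : ZMod n),
        (∏ k ∈ (Finset.univ.erase (0 : ZMod n)).erase j, p (Sum.inl k)) • prj (Sum.inl j)) p := by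
  unfold Apf
  exact HasFDerivAt.finset_prod (fun i _ => coord_hasFDerivAt (Sum.inl i) p)

lemma A'_single (p : TodaPt n) (u : ZMod n ⊕ ZMod n) :
    (∑ j ∈ Finset.univ.erase (0 : ZMod n),
        (∏ k ∈ (Finset.univ.erase (0 : ZMod n)).erase j, p (Sum.inl k)) • prj (Sum.inl j))
      (Pi.single u 1) = dAf n p u := by
  rcases u with j0 | j0 <;>
    simp only [ContinuousLinearMap.coe_sum', Finset.sum_apply,
      ContinuousLinearMap.coe_smul', Pi.smul_apply, smul_eq_mul, prj_single,
      Sum.inl.injEq, reduceCtorEq, if_false, mul_ite, mul_one, mul_zero, dAf,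
      Finset.sum_ite_eq', Finset.mem_erase, Finset.mem_univ, and_true]
  · by_cases h : j0 = 0 <;> simp [h]
  · simp

lemma Apf_ne (p : TodaPt n) (hp : ∀ k : ZMod n, p (Sum.inl k) ≠ 0) : Apf n p ≠ 0 := by
  rw [Apf, Finset.prod_ne_zero_iff]; exact fun k _ => hp k

lemma Ainv_hasFDerivAt (p : TodaPt n) (hp : ∀ k : ZMod n, p (Sum.inl k) ≠ 0) :
    HasFDerivAt (fun q => (Apf n q)⁻¹)
      ((ContinuousLinearMap.smulRight (1 : ℂ →L[ℂ] ℂ) (-(Apf n p ^ 2)⁻¹)).comp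
        (∑ j ∈ Finset.univ.erase (0 : ZMod n),
          (∏ k ∈ (Finset.univ.erase (0 : ZMod n)).erase j, p (Sum.inl k)) • prj (Sum.inl j))) p :=
  (hasFDerivAt_inv (Apf_ne p hp)).comp p (A_hasFDerivAt p)


lemma Z2_dv {f : TodaPt n → ℂ} (hf : ContDiff ℂ 2 f) (p : TodaPt n)
    (hp : ∀ k : ZMod n, p (Sum.inl k) ≠ 0) (u : ZMod n ⊕ ZMod n) :
    Dv n u (Z2f n f) p
      = -(Apf n p ^ 2)⁻¹ * dAf n p u * Dv n (Sum.inl 0) f p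
        + (Apf n p)⁻¹ * fderiv ℂ (fderiv ℂ f) p (Pi.single u 1) (Pi.single (Sum.inl 0) 1) := by
  have h := (Ainv_hasFDerivAt p hp).fun_mul (dv_hasFDerivAt hf (Sum.inl 0) p)
  rw [Dv, show Z2f n f = fun q => (Apf n q)⁻¹ * Dv n (Sum.inl 0) f q from rfl, h.fderiv]
  simp only [ContinuousLinearMap.add_apply, ContinuousLinearMap.coe_smul', Pi.smul_apply,
    smul_eq_mul, ContinuousLinearMap.coe_comp', Function.comp_apply, A'_single,
    ContinuousLinearMap.smulRight_apply, ContinuousLinearMap.one_apply,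
    ContinuousLinearMap.flip_apply]
  ring

lemma br_dv0 {f g : TodaPt n → ℂ} (hf : ContDiff ℂ 2 f) (hg : ContDiff ℂ 2 g)
    (lam : ℂ) (p : TodaPt n) :
    Dv n (Sum.inl 0) (todaBr n lam f g) p
      = ∑ u : ZMod n ⊕ ZMod n, ∑ v : ZMod n ⊕ ZMod n,
          (Pder0 n lam u v p * Dv n u f p * Dv n v g p
            + todaPfun n lam u v p
              * fderiv ℂ (fderiv ℂ f) p (Pi.single (Sum.inl 0) 1) (Pi.single u 1)
              * Dv n v g p
            + todaPfun n lam u v p * Dv n u f p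
              * fderiv ℂ (fderiv ℂ g) p (Pi.single (Sum.inl 0) 1) (Pi.single v 1)) := by
  have hterm : ∀ u v : ZMod n ⊕ ZMod n, HasFDerivAt
      (fun q => todaPfun n lam u v q * Dv n u f q * Dv n v g q)
      ((todaPfun n lam u v p * Dv n u f p) • ((fderiv ℂ (fderiv ℂ g) p).flip (Pi.single v 1))
        + Dv n v g p • (todaPfun n lam u v p • ((fderiv ℂ (fderiv ℂ f) p).flip (Pi.single u 1))
            + Dv n u f p • fderiv ℂ (todaPfun n lam u v) p)) p := fun u v =>
    (((P_diff lam u v p).hasFDerivAt.mul (dv_hasFDerivAt hf u p)).mul (dv_hasFDerivAt hg v p))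
  have hsum := HasFDerivAt.fun_sum
    (fun (u : ZMod n ⊕ ZMod n) (_ : u ∈ Finset.univ) => HasFDerivAt.fun_sum
      (fun (v : ZMod n ⊕ ZMod n) (_ : v ∈ Finset.univ) => hterm u v))
  rw [Dv, show todaBr n lam f g = (fun q => ∑ u : ZMod n ⊕ ZMod n, ∑ v : ZMod n ⊕ ZMod n,
    todaPfun n lam u v q * Dv n u f q * Dv n v g q) from rfl, hsum.fderiv]
  simp only [ContinuousLinearMap.coe_sum', Finset.sum_apply, ContinuousLinearMap.add_apply,
    ContinuousLinearMap.coe_smul', Pi.smul_apply, smul_eq_mul, ContinuousLinearMap.flip_apply]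
  refine Finset.sum_congr rfl fun u _ => Finset.sum_congr rfl fun v _ => ?_
  rw [P_dv0]
  ring

lemma lhs_reduce {f g : TodaPt n → ℂ} (hf : ContDiff ℂ 2 f) (hg : ContDiff ℂ 2 g)
    (lam : ℂ) (p : TodaPt n) (hp : ∀ k : ZMod n, p (Sum.inl k) ≠ 0) :
    Z2f n (todaBr n lam f g) p - todaBr n lam (Z2f n f) g p - todaBr n lam f (Z2f n g) p
      = ∑ u : ZMod n ⊕ ZMod n, ∑ v : ZMod n ⊕ ZMod n,
          ((Apf n p)⁻¹ * Pder0 n lam u v p * Dv n u f p * Dv n v g p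
            + (Apf n p ^ 2)⁻¹ * dAf n p u * todaPfun n lam u v p
              * Dv n (Sum.inl 0) f p * Dv n v g p
            + (Apf n p ^ 2)⁻¹ * dAf n p v * todaPfun n lam u v p
              * Dv n u f p * Dv n (Sum.inl 0) g p) := by
  have hZ : Z2f n (todaBr n lam f g) p
      = (Apf n p)⁻¹ * Dv n (Sum.inl 0) (todaBr n lam f g) p := rfl
  have h2 : todaBr n lam (Z2f n f) g p = ∑ u : ZMod n ⊕ ZMod n, ∑ v : ZMod n ⊕ ZMod n,
      todaPfun n lam u v p
        * (-(Apf n p ^ 2)⁻¹ * dAf n p u * Dv n (Sum.inl 0) f p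
            + (Apf n p)⁻¹ * fderiv ℂ (fderiv ℂ f) p (Pi.single u 1) (Pi.single (Sum.inl 0) 1))
        * Dv n v g p := by
    unfold todaBr
    exact Finset.sum_congr rfl fun u _ => Finset.sum_congr rfl fun v _ => by
      rw [Z2_dv hf p hp u]
  have h3 : todaBr n lam f (Z2f n g) p = ∑ u : ZMod n ⊕ ZMod n, ∑ v : ZMod n ⊕ ZMod n,
      todaPfun n lam u v p * Dv n u f p
        * (-(Apf n p ^ 2)⁻¹ * dAf n p v * Dv n (Sum.inl 0) g p
            + (Apf n p)⁻¹ * fderiv ℂ (fderiv ℂ g) p (Pi.single v 1) (Pi.single (Sum.inl 0) 1)) := by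
    unfold todaBr
    exact Finset.sum_congr rfl fun u _ => Finset.sum_congr rfl fun v _ => by
      rw [Z2_dv hg p hp v]
  rw [hZ, br_dv0 hf hg lam p, h2, h3, Finset.mul_sum]
  rw [← Finset.sum_sub_distrib, ← Finset.sum_sub_distrib]
  refine Finset.sum_congr rfl fun u _ => ?_
  rw [Finset.mul_sum, ← Finset.sum_sub_distrib, ← Finset.sum_sub_distrib]
  refine Finset.sum_congr rfl fun v _ => ?_
  have hsf := ((hf.contDiffAt (x := p)).isSymmSndFDerivAt (by simp))
    (Pi.single u (1:ℂ)) (Pi.single (Sum.inl (0 : ZMod n)) (1:ℂ))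
  have hsg := ((hg.contDiffAt (x := p)).isSymmSndFDerivAt (by simp))
    (Pi.single v (1:ℂ)) (Pi.single (Sum.inl (0 : ZMod n)) (1:ℂ))
  rw [hsf, hsg]
  ring


-- algebraic helpers
lemma sum_single (c : ZMod n) (X : ZMod n → ℂ) :
    ∑ l : ZMod n, (if l = c then X l else 0) = X c := by
  rw [Finset.sum_ite_eq' Finset.univ c X]; simp

lemma sum_pair {c1 c2 : ZMod n} (h : c1 ≠ c2) (X Y : ZMod n → ℂ) :
    ∑ l : ZMod n, (if l = c1 then X l else if l = c2 then Y l else 0) = X c1 + Y c2 := by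
  have e : ∀ l : ZMod n, (if l = c1 then X l else if l = c2 then Y l else 0)
      = (if l = c1 then X l else 0) + (if l = c2 then Y l else 0) := by
    intro l
    split_ifs with h1 h2 <;> simp_all
  rw [Finset.sum_congr rfl fun l _ => e l, Finset.sum_add_distrib, sum_single, sum_single]

lemma sum_pair' {c1 c2 : ZMod n} (h : c1 ≠ c2) (X Y : ZMod n → ℂ) :
    ∑ l : ZMod n, (if c1 = l then X l else if l = c2 then Y l else 0) = X c1 + Y c2 := by
  have e : ∀ l : ZMod n, (if c1 = l then X l else if l = c2 then Y l else 0)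
      = (if l = c1 then X l else if l = c2 then Y l else 0) := by
    intro l
    by_cases h1 : c1 = l
    · simp [h1]
    · simp [h1, show ¬(l = c1) from fun hh => h1 hh.symm]
  rw [Finset.sum_congr rfl fun l _ => e l, sum_pair h]

lemma shift_sum (h : ZMod n → ℂ) : ∑ j : ZMod n, h (j + 1) = ∑ j : ZMod n, h j :=
  Fintype.sum_equiv (Equiv.addRight 1) _ _ (fun _ => rfl)

lemma shift_sum' (h : ZMod n → ℂ) : ∑ j : ZMod n, h (j - 1) = ∑ j : ZMod n, h j :=
  Fintype.sum_equiv (Equiv.subRight 1) _ _ (fun _ => rfl)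

lemma erase_sum (t : ZMod n → ℂ) :
    ∑ j ∈ Finset.univ.erase (0 : ZMod n), t j = (∑ j : ZMod n, t j) - t 0 := by
  rw [eq_sub_iff_add_eq, add_comm, Finset.add_sum_erase _ t (Finset.mem_univ 0)]

lemma hone_nz (hn : 3 ≤ n) : (1 : ZMod n) ≠ 0 := by
  have : ((1 : ℕ) : ZMod n) ≠ 0 := by
    rw [Ne, ZMod.natCast_eq_zero_iff]
    intro h; have := Nat.le_of_dvd one_pos h; omega
  simpa using this

lemma htwo_nz (hn : 3 ≤ n) : (2 : ZMod n) ≠ 0 := by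
  have : ((2 : ℕ) : ZMod n) ≠ 0 := by
    rw [Ne, ZMod.natCast_eq_zero_iff]
    intro h; have := Nat.le_of_dvd two_pos h; omega
  simpa using this

-- inner sum over v of P (inl j) v * G v
lemma alg_W (hn : 3 ≤ n) (lam : ℂ) (p : TodaPt n) (G : ZMod n ⊕ ZMod n → ℂ) (j : ZMod n) :
    ∑ v : ZMod n ⊕ ZMod n, todaPfun n lam (Sum.inl j) v p * G v
      = p (Sum.inl j) *
          (-(p (Sum.inl (j+1)) * G (Sum.inl (j+1))) + p (Sum.inl (j-1)) * G (Sum.inl (j-1))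
            - (p (Sum.inr j) - lam) * G (Sum.inr j)
            + (p (Sum.inr (j+1)) - lam) * G (Sum.inr (j+1))) := by
  rw [Fintype.sum_sum_type]
  have hc : ∀ l : ZMod n, (j = l + 1) ↔ (l = j - 1) := by
    intro l; constructor <;> intro h <;> linear_combination -h
  have hne : (j + 1 : ZMod n) ≠ j - 1 := by
    intro h; exact htwo_nz hn (by linear_combination h)
  have hne2 : j ≠ j + 1 := by
    intro h; exact hone_nz hn (by linear_combination -h)
  have e1 : ∑ l : ZMod n, todaPfun n lam (Sum.inl j) (Sum.inl l) p * G (Sum.inl l)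
      = -(p (Sum.inl j) * p (Sum.inl (j+1))) * G (Sum.inl (j+1))
        + p (Sum.inl (j-1)) * p (Sum.inl j) * G (Sum.inl (j-1)) := by
    simp only [todaPfun, ite_mul, zero_mul, hc]
    exact sum_pair hne _ _
  have e2 : ∑ l : ZMod n, todaPfun n lam (Sum.inl j) (Sum.inr l) p * G (Sum.inr l)
      = -(p (Sum.inl j) * (p (Sum.inr j) - lam)) * G (Sum.inr j)
        + p (Sum.inl j) * (p (Sum.inr (j+1)) - lam) * G (Sum.inr (j+1)) := by
    simp only [todaPfun, ite_mul, zero_mul]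
    exact sum_pair hne2 _ _
  rw [e1, e2]
  ring

-- inner sum over u of P u (inl j) * F u
lemma alg_W' (hn : 3 ≤ n) (lam : ℂ) (p : TodaPt n) (F : ZMod n ⊕ ZMod n → ℂ) (j : ZMod n) :
    ∑ u : ZMod n ⊕ ZMod n, todaPfun n lam u (Sum.inl j) p * F u
      = p (Sum.inl j) *
          (p (Sum.inl (j+1)) * F (Sum.inl (j+1)) - p (Sum.inl (j-1)) * F (Sum.inl (j-1))
            + (p (Sum.inr j) - lam) * F (Sum.inr j)
            - (p (Sum.inr (j+1)) - lam) * F (Sum.inr (j+1))) := by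
  rw [Fintype.sum_sum_type]
  have hc1 : ∀ k : ZMod n, (j = k + 1) ↔ (k = j - 1) := by
    intro k; constructor <;> intro h <;> linear_combination -h
  have hc2 : ∀ k : ZMod n, (k = j + 1) ↔ (k = j + 1) := fun _ => Iff.rfl
  have hne : (j - 1 : ZMod n) ≠ j + 1 := by
    intro h; exact htwo_nz hn (by linear_combination -h)
  have hne2 : j ≠ j + 1 := by
    intro h; exact hone_nz hn (by linear_combination -h)
  have e1 : ∑ k : ZMod n, todaPfun n lam (Sum.inl k) (Sum.inl j) p * F (Sum.inl k)
      = -(p (Sum.inl (j-1)) * p (Sum.inl j)) * F (Sum.inl (j-1))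
        + p (Sum.inl j) * p (Sum.inl (j+1)) * F (Sum.inl (j+1)) := by
    simp only [todaPfun, ite_mul, zero_mul, hc1]
    exact sum_pair hne _ _
  have e2 : ∑ k : ZMod n, todaPfun n lam (Sum.inr k) (Sum.inl j) p * F (Sum.inr k)
      = p (Sum.inl j) * (p (Sum.inr j) - lam) * F (Sum.inr j)
        + -(p (Sum.inl j) * (p (Sum.inr (j+1)) - lam)) * F (Sum.inr (j+1)) := by
    simp only [todaPfun, ite_mul, zero_mul, hc1]
    exact sum_pair hne2 _ _
  rw [e1, e2]
  ring


section blocks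
variable (lam : ℂ) (p : TodaPt n) (F G : ZMod n ⊕ ZMod n → ℂ)

lemma alg_LL (hn : 3 ≤ n) :
    ∑ k : ZMod n, ∑ l : ZMod n,
        (Apf n p)⁻¹ * Pder0 n lam (Sum.inl k) (Sum.inl l) p * F (Sum.inl k) * G (Sum.inl l)
      = (Apf n p)⁻¹ *
          (-(p (Sum.inl 1) * F (Sum.inl 0) * G (Sum.inl 1))
            - p (Sum.inl (-1)) * F (Sum.inl (-1)) * G (Sum.inl 0)
            + p (Sum.inl 1) * F (Sum.inl 1) * G (Sum.inl 0)
            + p (Sum.inl (-1)) * F (Sum.inl 0) * G (Sum.inl (-1))) := by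
  have hA : ¬((0:ZMod n) = -1) := fun h => hone_nz hn (by linear_combination h)
  have hB : ¬((0:ZMod n) = 1) := fun h => hone_nz hn (by linear_combination -h)
  have hC : ¬((-1:ZMod n) = 1) := fun h => htwo_nz hn (by linear_combination -h)
  have inner : ∀ k : ZMod n, (∑ l : ZMod n,
      (Apf n p)⁻¹ * Pder0 n lam (Sum.inl k) (Sum.inl l) p * F (Sum.inl k) * G (Sum.inl l))
      = (if k = 0 then -((Apf n p)⁻¹ * p (Sum.inl (k+1)) * F (Sum.inl k) * G (Sum.inl (k+1)))
          else 0)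
        + (if k = -1 then -((Apf n p)⁻¹ * p (Sum.inl k) * F (Sum.inl k) * G (Sum.inl (k+1)))
          else 0)
        + (if k = 1 then (Apf n p)⁻¹ * p (Sum.inl k) * F (Sum.inl k) * G (Sum.inl (k-1))
          else 0)
        + (if k = 0 then (Apf n p)⁻¹ * p (Sum.inl (k-1)) * F (Sum.inl k) * G (Sum.inl (k-1))
          else 0) := by
    intro k
    have hne : (k + 1 : ZMod n) ≠ k - 1 := fun h => htwo_nz hn (by linear_combination h)
    have hiff : ∀ l : ZMod n, (k = l + 1) ↔ (l = k - 1) := by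
      intro l; constructor <;> intro h <;> linear_combination -h
    simp only [Pder0, hiff, mul_ite, ite_mul, zero_mul, mul_zero]
    rw [sum_pair hne]
    have hi1 : (k + 1 = (0:ZMod n)) ↔ (k = -1) := by
      constructor <;> intro h <;> linear_combination h
    have hi2 : (k - 1 = (0:ZMod n)) ↔ (k = 1) := by
      constructor <;> intro h <;> linear_combination h
    simp only [dlt, hi1, hi2]
    split_ifs <;> first | ring | simp_all
  rw [Finset.sum_congr rfl fun k _ => inner k]
  rw [Finset.sum_add_distrib, Finset.sum_add_distrib, Finset.sum_add_distrib,
    sum_single, sum_single, sum_single, sum_single]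
  have e1 : (0:ZMod n) + 1 = 1 := zero_add 1
  have e2 : (-1:ZMod n) + 1 = 0 := neg_add_cancel 1
  have e3 : (1:ZMod n) - 1 = 0 := sub_self 1
  have e4 : (0:ZMod n) - 1 = -1 := zero_sub 1
  rw [e1, e2, e3, e4]
  ring

lemma alg_LR (hn : 3 ≤ n) :
    ∑ k : ZMod n, ∑ l : ZMod n,
        (Apf n p)⁻¹ * Pder0 n lam (Sum.inl k) (Sum.inr l) p * F (Sum.inl k) * G (Sum.inr l)
      = (Apf n p)⁻¹ *
          (-((p (Sum.inr 0) - lam) * F (Sum.inl 0) * G (Sum.inr 0))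
            + (p (Sum.inr 1) - lam) * F (Sum.inl 0) * G (Sum.inr 1)) := by
  have inner : ∀ k : ZMod n, (∑ l : ZMod n,
      (Apf n p)⁻¹ * Pder0 n lam (Sum.inl k) (Sum.inr l) p * F (Sum.inl k) * G (Sum.inr l))
      = (if k = 0 then
          -((Apf n p)⁻¹ * (p (Sum.inr k) - lam) * F (Sum.inl k) * G (Sum.inr k))
            + (Apf n p)⁻¹ * (p (Sum.inr (k+1)) - lam) * F (Sum.inl k) * G (Sum.inr (k+1))
          else 0) := by
    intro k
    have hne : k ≠ k + 1 := fun h => hone_nz hn (by linear_combination -h)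
    simp only [Pder0, mul_ite, ite_mul, zero_mul, mul_zero]
    rw [sum_pair hne]
    simp only [dlt]
    split_ifs <;> ring
  rw [Finset.sum_congr rfl fun k _ => inner k, sum_single]
  ring

lemma alg_RL (hn : 3 ≤ n) :
    ∑ k : ZMod n, ∑ l : ZMod n,
        (Apf n p)⁻¹ * Pder0 n lam (Sum.inr k) (Sum.inl l) p * F (Sum.inr k) * G (Sum.inl l)
      = (Apf n p)⁻¹ *
          ((p (Sum.inr 0) - lam) * F (Sum.inr 0) * G (Sum.inl 0)
            - (p (Sum.inr 1) - lam) * F (Sum.inr 1) * G (Sum.inl 0)) := by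
  have hB : ¬((0:ZMod n) = 1) := fun h => hone_nz hn (by linear_combination -h)
  have inner : ∀ k : ZMod n, (∑ l : ZMod n,
      (Apf n p)⁻¹ * Pder0 n lam (Sum.inr k) (Sum.inl l) p * F (Sum.inr k) * G (Sum.inl l))
      = (if k = 0 then
            (Apf n p)⁻¹ * (p (Sum.inr k) - lam) * F (Sum.inr k) * G (Sum.inl k) else 0)
        + (if k = 1 then
            -((Apf n p)⁻¹ * (p (Sum.inr k) - lam) * F (Sum.inr k) * G (Sum.inl (k-1)))
          else 0) := by
    intro k
    have hne : k ≠ k - 1 := fun h => hone_nz hn (by linear_combination h)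
    have hiff : ∀ l : ZMod n, (k = l + 1) ↔ (l = k - 1) := by
      intro l; constructor <;> intro h <;> linear_combination -h
    simp only [Pder0, hiff, mul_ite, ite_mul, zero_mul, mul_zero]
    rw [sum_pair' hne]
    have hi2 : (k - 1 = (0:ZMod n)) ↔ (k = 1) := by
      constructor <;> intro h <;> linear_combination h
    simp only [dlt, hi2]
    split_ifs <;> first | ring | simp_all
  rw [Finset.sum_congr rfl fun k _ => inner k]
  rw [Finset.sum_add_distrib, sum_single, sum_single]
  have e3 : (1:ZMod n) - 1 = 0 := sub_self 1
  rw [e3]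
  ring

lemma alg_RR (hn : 3 ≤ n) :
    ∑ k : ZMod n, ∑ l : ZMod n,
        (Apf n p)⁻¹ * Pder0 n lam (Sum.inr k) (Sum.inr l) p * F (Sum.inr k) * G (Sum.inr l)
      = (Apf n p)⁻¹ *
          (-(F (Sum.inr 0) * G (Sum.inr 1)) + F (Sum.inr 1) * G (Sum.inr 0)) := by
  have hB : ¬((0:ZMod n) = 1) := fun h => hone_nz hn (by linear_combination -h)
  have inner : ∀ k : ZMod n, (∑ l : ZMod n,
      (Apf n p)⁻¹ * Pder0 n lam (Sum.inr k) (Sum.inr l) p * F (Sum.inr k) * G (Sum.inr l))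
      = (if k = 0 then
            -((Apf n p)⁻¹ * F (Sum.inr k) * G (Sum.inr (k+1))) else 0)
        + (if k = 1 then
            (Apf n p)⁻¹ * F (Sum.inr k) * G (Sum.inr (k-1)) else 0) := by
    intro k
    have hne : (k + 1 : ZMod n) ≠ k - 1 := fun h => htwo_nz hn (by linear_combination h)
    have hiff : ∀ l : ZMod n, (k = l + 1) ↔ (l = k - 1) := by
      intro l; constructor <;> intro h <;> linear_combination -h
    simp only [Pder0, hiff, mul_ite, ite_mul, zero_mul, mul_zero]
    rw [sum_pair hne]
    have hi1 : (k + 1 = (0:ZMod n)) ↔ (k = -1) := by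
      constructor <;> intro h <;> linear_combination h
    have hi2 : (k - 1 = (0:ZMod n)) ↔ (k = 1) := by
      constructor <;> intro h <;> linear_combination h
    have hA : ¬((0:ZMod n) = -1) := fun h => hone_nz hn (by linear_combination h)
    have hC : ¬((1:ZMod n) = -1) := fun h => htwo_nz hn (by linear_combination h)
    simp only [dlt, hi1, hi2]
    split_ifs <;> first | ring | simp_all
  rw [Finset.sum_congr rfl fun k _ => inner k]
  rw [Finset.sum_add_distrib, sum_single, sum_single]
  ring

end blocks


lemma sum_univ_if_zero (t : ZMod n → ℂ) :
    ∑ j : ZMod n, (if j = 0 then 0 else t j) = ∑ j ∈ Finset.univ.erase (0 : ZMod n), t j := by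
  rw [show (∑ j : ZMod n, (if j = 0 then 0 else t j))
      = ∑ j ∈ Finset.univ.erase (0 : ZMod n), (if j = 0 then 0 else t j) from
    (Finset.sum_erase _ (by simp)).symm]
  exact Finset.sum_congr rfl fun j hj => by
    rw [if_neg (Finset.mem_erase.mp hj).1]

section SS
variable (lam : ℂ) (p : TodaPt n) (F G : ZMod n ⊕ ZMod n → ℂ)

lemma alg_S1 (hn : 3 ≤ n) :
    ∑ u : ZMod n ⊕ ZMod n, ∑ v : ZMod n ⊕ ZMod n,
        (Apf n p)⁻¹ * Pder0 n lam u v p * F u * G v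
      = (Apf n p)⁻¹ *
          (-(p (Sum.inl 1) * F (Sum.inl 0) * G (Sum.inl 1))
            - p (Sum.inl (-1)) * F (Sum.inl (-1)) * G (Sum.inl 0)
            + p (Sum.inl 1) * F (Sum.inl 1) * G (Sum.inl 0)
            + p (Sum.inl (-1)) * F (Sum.inl 0) * G (Sum.inl (-1))
            - (p (Sum.inr 0) - lam) * F (Sum.inl 0) * G (Sum.inr 0)
            + (p (Sum.inr 1) - lam) * F (Sum.inl 0) * G (Sum.inr 1)
            + (p (Sum.inr 0) - lam) * F (Sum.inr 0) * G (Sum.inl 0)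
            - (p (Sum.inr 1) - lam) * F (Sum.inr 1) * G (Sum.inl 0)
            - F (Sum.inr 0) * G (Sum.inr 1) + F (Sum.inr 1) * G (Sum.inr 0)) := by
  simp only [Fintype.sum_sum_type]
  rw [Finset.sum_add_distrib, Finset.sum_add_distrib]
  rw [alg_LL lam p F G hn, alg_LR lam p F G hn, alg_RL lam p F G hn, alg_RR lam p F G hn]
  ring

lemma alg_S2 (hn : 3 ≤ n) (hp : ∀ k : ZMod n, p (Sum.inl k) ≠ 0) (c : ℂ) :
    ∑ u : ZMod n ⊕ ZMod n, ∑ v : ZMod n ⊕ ZMod n,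
        (Apf n p ^ 2)⁻¹ * dAf n p u * todaPfun n lam u v p * c * G v
      = (Apf n p)⁻¹ * c *
          (p (Sum.inl 1) * G (Sum.inl 1) - p (Sum.inl (-1)) * G (Sum.inl (-1))
            + (p (Sum.inr 0) - lam) * G (Sum.inr 0) - (p (Sum.inr 1) - lam) * G (Sum.inr 1)) := by
  rw [Fintype.sum_sum_type]
  have hz : ∀ k : ZMod n, (∑ v : ZMod n ⊕ ZMod n,
      (Apf n p ^ 2)⁻¹ * dAf n p (Sum.inr k) * todaPfun n lam (Sum.inr k) v p * c * G v) = 0 := by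
    intro k; simp [dAf]
  rw [Finset.sum_congr rfl fun k _ => hz k, Finset.sum_const_zero, add_zero]
  have hj : ∀ j : ZMod n, (∑ v : ZMod n ⊕ ZMod n,
      (Apf n p ^ 2)⁻¹ * dAf n p (Sum.inl j) * todaPfun n lam (Sum.inl j) v p * c * G v)
      = (if j = 0 then 0 else
          (∏ k ∈ (Finset.univ.erase (0 : ZMod n)).erase j, p (Sum.inl k)) *
            ((Apf n p ^ 2)⁻¹ * c * (p (Sum.inl j) *
              (-(p (Sum.inl (j+1)) * G (Sum.inl (j+1)))
                + p (Sum.inl (j-1)) * G (Sum.inl (j-1))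
                - (p (Sum.inr j) - lam) * G (Sum.inr j)
                + (p (Sum.inr (j+1)) - lam) * G (Sum.inr (j+1)))))) := by
    intro j
    have step : (∑ v : ZMod n ⊕ ZMod n,
        (Apf n p ^ 2)⁻¹ * dAf n p (Sum.inl j) * todaPfun n lam (Sum.inl j) v p * c * G v)
        = ((Apf n p ^ 2)⁻¹ * dAf n p (Sum.inl j) * c) *
          ∑ v : ZMod n ⊕ ZMod n, todaPfun n lam (Sum.inl j) v p * G v := by
      rw [Finset.mul_sum]
      exact Finset.sum_congr rfl fun v _ => by ring
    rw [step, alg_W hn lam p G j]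
    simp only [dAf]
    split_ifs <;> ring
  rw [Finset.sum_congr rfl fun j _ => hj j, sum_univ_if_zero]
  have hterm : ∀ j ∈ Finset.univ.erase (0 : ZMod n),
      (∏ k ∈ (Finset.univ.erase (0 : ZMod n)).erase j, p (Sum.inl k)) *
        ((Apf n p ^ 2)⁻¹ * c * (p (Sum.inl j) *
          (-(p (Sum.inl (j+1)) * G (Sum.inl (j+1))) + p (Sum.inl (j-1)) * G (Sum.inl (j-1))
            - (p (Sum.inr j) - lam) * G (Sum.inr j)
            + (p (Sum.inr (j+1)) - lam) * G (Sum.inr (j+1)))))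
      = (Apf n p)⁻¹ * c *
          (-(p (Sum.inl (j+1)) * G (Sum.inl (j+1))) + p (Sum.inl (j-1)) * G (Sum.inl (j-1))
            - (p (Sum.inr j) - lam) * G (Sum.inr j)
            + (p (Sum.inr (j+1)) - lam) * G (Sum.inr (j+1))) := by
    intro j hj'
    have hEA : p (Sum.inl j) * ∏ k ∈ (Finset.univ.erase (0 : ZMod n)).erase j, p (Sum.inl k)
        = Apf n p := by unfold Apf; exact Finset.mul_prod_erase _ (fun k => p (Sum.inl k)) hj'
    have hA := Apf_ne p hp
    field_simp
    linear_combination c *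
      (-(p (Sum.inl (j+1)) * G (Sum.inl (j+1))) + p (Sum.inl (j-1)) * G (Sum.inl (j-1))
        - (p (Sum.inr j) - lam) * G (Sum.inr j)
        + (p (Sum.inr (j+1)) - lam) * G (Sum.inr (j+1))) * hEA
  rw [Finset.sum_congr rfl hterm, erase_sum]
  have hVsum : ∑ j : ZMod n, ((Apf n p)⁻¹ * c *
      (-(p (Sum.inl (j+1)) * G (Sum.inl (j+1))) + p (Sum.inl (j-1)) * G (Sum.inl (j-1))
        - (p (Sum.inr j) - lam) * G (Sum.inr j)
        + (p (Sum.inr (j+1)) - lam) * G (Sum.inr (j+1)))) = 0 := by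
    have e : ∀ j : ZMod n, (Apf n p)⁻¹ * c *
        (-(p (Sum.inl (j+1)) * G (Sum.inl (j+1))) + p (Sum.inl (j-1)) * G (Sum.inl (j-1))
          - (p (Sum.inr j) - lam) * G (Sum.inr j)
          + (p (Sum.inr (j+1)) - lam) * G (Sum.inr (j+1)))
        = -((Apf n p)⁻¹ * c * (p (Sum.inl (j+1)) * G (Sum.inl (j+1))))
            + (Apf n p)⁻¹ * c * (p (Sum.inl (j-1)) * G (Sum.inl (j-1)))
            - (Apf n p)⁻¹ * c * ((p (Sum.inr j) - lam) * G (Sum.inr j))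
            + (Apf n p)⁻¹ * c * ((p (Sum.inr (j+1)) - lam) * G (Sum.inr (j+1))) := by
      intro j; ring
    rw [Finset.sum_congr rfl fun j _ => e j]
    rw [Finset.sum_add_distrib, Finset.sum_sub_distrib, Finset.sum_add_distrib,
      Finset.sum_neg_distrib]
    have h1 := shift_sum (fun x => (Apf n p)⁻¹ * c * (p (Sum.inl x) * G (Sum.inl x)))
    have h2 := shift_sum' (fun x => (Apf n p)⁻¹ * c * (p (Sum.inl x) * G (Sum.inl x)))
    have h3 := shift_sum (fun x => (Apf n p)⁻¹ * c * ((p (Sum.inr x) - lam) * G (Sum.inr x)))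
    linear_combination -h1 + h2 + h3
  rw [hVsum]
  have e1 : (0:ZMod n) + 1 = 1 := zero_add 1
  have e4 : (0:ZMod n) - 1 = -1 := zero_sub 1
  rw [e1, e4]
  ring

lemma alg_S3 (hn : 3 ≤ n) (hp : ∀ k : ZMod n, p (Sum.inl k) ≠ 0) (c : ℂ) :
    ∑ u : ZMod n ⊕ ZMod n, ∑ v : ZMod n ⊕ ZMod n,
        (Apf n p ^ 2)⁻¹ * dAf n p v * todaPfun n lam u v p * F u * c
      = (Apf n p)⁻¹ * c *
          (-(p (Sum.inl 1) * F (Sum.inl 1)) + p (Sum.inl (-1)) * F (Sum.inl (-1))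
            - (p (Sum.inr 0) - lam) * F (Sum.inr 0) + (p (Sum.inr 1) - lam) * F (Sum.inr 1)) := by
  rw [Finset.sum_comm]
  rw [Fintype.sum_sum_type]
  have hz : ∀ k : ZMod n, (∑ u : ZMod n ⊕ ZMod n,
      (Apf n p ^ 2)⁻¹ * dAf n p (Sum.inr k) * todaPfun n lam u (Sum.inr k) p * F u * c) = 0 := by
    intro k; simp [dAf]
  rw [Finset.sum_congr rfl fun k _ => hz k, Finset.sum_const_zero, add_zero]
  have hj : ∀ j : ZMod n, (∑ u : ZMod n ⊕ ZMod n,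
      (Apf n p ^ 2)⁻¹ * dAf n p (Sum.inl j) * todaPfun n lam u (Sum.inl j) p * F u * c)
      = (if j = 0 then 0 else
          (∏ k ∈ (Finset.univ.erase (0 : ZMod n)).erase j, p (Sum.inl k)) *
            ((Apf n p ^ 2)⁻¹ * c * (p (Sum.inl j) *
              (p (Sum.inl (j+1)) * F (Sum.inl (j+1)) - p (Sum.inl (j-1)) * F (Sum.inl (j-1))
                + (p (Sum.inr j) - lam) * F (Sum.inr j)
                - (p (Sum.inr (j+1)) - lam) * F (Sum.inr (j+1)))))) := by
    intro j
    have step : (∑ u : ZMod n ⊕ ZMod n,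
        (Apf n p ^ 2)⁻¹ * dAf n p (Sum.inl j) * todaPfun n lam u (Sum.inl j) p * F u * c)
        = ((Apf n p ^ 2)⁻¹ * dAf n p (Sum.inl j) * c) *
          ∑ u : ZMod n ⊕ ZMod n, todaPfun n lam u (Sum.inl j) p * F u := by
      rw [Finset.mul_sum]
      exact Finset.sum_congr rfl fun u _ => by ring
    rw [step, alg_W' hn lam p F j]
    simp only [dAf]
    split_ifs <;> ring
  rw [Finset.sum_congr rfl fun j _ => hj j, sum_univ_if_zero]
  have hterm : ∀ j ∈ Finset.univ.erase (0 : ZMod n),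
      (∏ k ∈ (Finset.univ.erase (0 : ZMod n)).erase j, p (Sum.inl k)) *
        ((Apf n p ^ 2)⁻¹ * c * (p (Sum.inl j) *
          (p (Sum.inl (j+1)) * F (Sum.inl (j+1)) - p (Sum.inl (j-1)) * F (Sum.inl (j-1))
            + (p (Sum.inr j) - lam) * F (Sum.inr j)
            - (p (Sum.inr (j+1)) - lam) * F (Sum.inr (j+1)))))
      = (Apf n p)⁻¹ * c *
          (p (Sum.inl (j+1)) * F (Sum.inl (j+1)) - p (Sum.inl (j-1)) * F (Sum.inl (j-1))
            + (p (Sum.inr j) - lam) * F (Sum.inr j)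
            - (p (Sum.inr (j+1)) - lam) * F (Sum.inr (j+1))) := by
    intro j hj'
    have hEA : p (Sum.inl j) * ∏ k ∈ (Finset.univ.erase (0 : ZMod n)).erase j, p (Sum.inl k)
        = Apf n p := by unfold Apf; exact Finset.mul_prod_erase _ (fun k => p (Sum.inl k)) hj'
    have hA := Apf_ne p hp
    field_simp
    linear_combination c *
      (p (Sum.inl (j+1)) * F (Sum.inl (j+1)) - p (Sum.inl (j-1)) * F (Sum.inl (j-1))
        + (p (Sum.inr j) - lam) * F (Sum.inr j)
        - (p (Sum.inr (j+1)) - lam) * F (Sum.inr (j+1))) * hEA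
  rw [Finset.sum_congr rfl hterm, erase_sum]
  have hVsum : ∑ j : ZMod n, ((Apf n p)⁻¹ * c *
      (p (Sum.inl (j+1)) * F (Sum.inl (j+1)) - p (Sum.inl (j-1)) * F (Sum.inl (j-1))
        + (p (Sum.inr j) - lam) * F (Sum.inr j)
        - (p (Sum.inr (j+1)) - lam) * F (Sum.inr (j+1)))) = 0 := by
    have e : ∀ j : ZMod n, (Apf n p)⁻¹ * c *
        (p (Sum.inl (j+1)) * F (Sum.inl (j+1)) - p (Sum.inl (j-1)) * F (Sum.inl (j-1))
          + (p (Sum.inr j) - lam) * F (Sum.inr j)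
          - (p (Sum.inr (j+1)) - lam) * F (Sum.inr (j+1)))
        = (Apf n p)⁻¹ * c * (p (Sum.inl (j+1)) * F (Sum.inl (j+1)))
            - (Apf n p)⁻¹ * c * (p (Sum.inl (j-1)) * F (Sum.inl (j-1)))
            + (Apf n p)⁻¹ * c * ((p (Sum.inr j) - lam) * F (Sum.inr j))
            - (Apf n p)⁻¹ * c * ((p (Sum.inr (j+1)) - lam) * F (Sum.inr (j+1))) := by
      intro j; ring
    rw [Finset.sum_congr rfl fun j _ => e j]
    rw [Finset.sum_sub_distrib, Finset.sum_add_distrib, Finset.sum_sub_distrib]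
    have h1 := shift_sum (fun x => (Apf n p)⁻¹ * c * (p (Sum.inl x) * F (Sum.inl x)))
    have h2 := shift_sum' (fun x => (Apf n p)⁻¹ * c * (p (Sum.inl x) * F (Sum.inl x)))
    have h3 := shift_sum (fun x => (Apf n p)⁻¹ * c * ((p (Sum.inr x) - lam) * F (Sum.inr x)))
    linear_combination h1 - h2 - h3
  rw [hVsum]
  have e1 : (0:ZMod n) + 1 = 1 := zero_add 1
  have e4 : (0:ZMod n) - 1 = -1 := zero_sub 1
  rw [e1, e4]
  ring

end SS


lemma keyalg (hn : 3 ≤ n) (lam : ℂ) (p : TodaPt n)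
    (hp : ∀ k : ZMod n, p (Sum.inl k) ≠ 0) (F G : ZMod n ⊕ ZMod n → ℂ) :
    ∑ u : ZMod n ⊕ ZMod n, ∑ v : ZMod n ⊕ ZMod n,
        ((Apf n p)⁻¹ * Pder0 n lam u v p * F u * G v
          + (Apf n p ^ 2)⁻¹ * dAf n p u * todaPfun n lam u v p * F (Sum.inl 0) * G v
          + (Apf n p ^ 2)⁻¹ * dAf n p v * todaPfun n lam u v p * F u * G (Sum.inl 0))
      = (Apf n p)⁻¹ * (F (Sum.inr 1) * G (Sum.inr 0) - F (Sum.inr 0) * G (Sum.inr 1)) := by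
  simp only [Finset.sum_add_distrib]
  rw [alg_S1 lam p F G hn, alg_S2 lam p G hn hp (F (Sum.inl 0)),
    alg_S3 lam p F hn hp (G (Sum.inl 0))]
  ring

end


/-- the deformation identity `Lie_{Z₂}(P_λ) = Z₁ ∧ Y_{2,1}` for the
periodic Toda pencil: for all `λ`, all twice continuously differentiable `f, g`, and
every point with all `a`-coordinates nonzero,
`Z₂({f,g}_λ) − {Z₂f, g}_λ − {f, Z₂g}_λ = Z₁(f) Y_{2,1}(g) − Z₁(g) Y_{2,1}(f)`. -/
theorem stmt11 (n : ℕ) [NeZero n] (hn : 3 ≤ n) (lam : ℂ)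
    (f g : TodaPt n → ℂ) (hf : ContDiff ℂ 2 f) (hg : ContDiff ℂ 2 g)
    (p : TodaPt n) (hp : ∀ k : ZMod n, p (Sum.inl k) ≠ 0) :
    Z2f n (todaBr n lam f g) p - todaBr n lam (Z2f n f) g p - todaBr n lam f (Z2f n g) p
      = Z1f n f p * Y21f n g p - Z1f n g p * Y21f n f p := by
  rw [lhs_reduce hf hg lam p hp]
  rw [keyalg hn lam p hp (fun u => Dv n u f p) (fun v => Dv n v g p)]
  unfold Z1f Y21f
  rw [show (∏ k ∈ Finset.univ.erase (0 : ZMod n), p (Sum.inl k)) = Apf n p from rfl]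
  ring
end

section
/- Suppose H = (H_1,...,H_n)^T is a vector of functions on a manifold and T is an invertible matrix of functions such that each row j of T and the j-th entry of V := T·H depend only on the pair of coordinates (λ_j, μ_j) of a coordinate system (λ_1,μ_1,...,λ_n,μ_n). Then the matrix F := T^{−1} Λ T, with Λ = diag(λ_1,...,λ_n), satisfies the entrywise identity N* dF = F dF, where N* is the operator acting on differentials by N* dλ_j = λ_j dλ_j, N* dμ_j = λ_j dμ_j. -/
open scoped Matrix


/-- Phase space with Darboux–Nijenhuis coordinates: a point is a pair
`(λ, μ) = (p.1, p.2)` of `n`-tuples of complex numbers. -/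
abbrev DNPt (n : ℕ) := (Fin n → ℂ) × (Fin n → ℂ)

/-- Partial derivative along `λ_j`. -/
noncomputable def Dlam {n : ℕ} (j : Fin n) (f : DNPt n → ℂ) (p : DNPt n) : ℂ :=
  fderiv ℂ f p (Pi.single j 1, 0)

/-- Partial derivative along `μ_j`. -/
noncomputable def Dmu {n : ℕ} (j : Fin n) (f : DNPt n → ℂ) (p : DNPt n) : ℂ :=
  fderiv ℂ f p (0, Pi.single j 1)


lemma myDiffDet {n : ℕ} {E : Type*} [NormedAddCommGroup E] [NormedSpace ℂ E]
    {A : E → Matrix (Fin n) (Fin n) ℂ} (h : ∀ a b, Differentiable ℂ fun q => A q a b) :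
    Differentiable ℂ fun q => (A q).det := by
  have : (fun q => (A q).det)
      = fun q => ∑ σ : Equiv.Perm (Fin n), (Equiv.Perm.sign σ : ℂ) * ∏ a, A q (σ a) a := by
    funext q
    simp [Matrix.det_apply, Units.smul_def, zsmul_eq_mul]
  rw [this]
  refine Differentiable.fun_sum fun σ _ => Differentiable.const_mul ?_ _
  intro q
  exact (HasFDerivAt.finset_prod fun a _ => ((h (σ a) a) q).hasFDerivAt).differentiableAt

noncomputable def Ment {n : ℕ} (T : Fin n → Fin n → (ℂ × ℂ) → ℂ) (q : DNPt n) :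
    Matrix (Fin n) (Fin n) ℂ :=
  Matrix.of fun j' i' => T j' i' (q.1 j', q.2 j')

noncomputable def Fent {n : ℕ} (T : Fin n → Fin n → (ℂ × ℂ) → ℂ) (q : DNPt n) :
    Matrix (Fin n) (Fin n) ℂ :=
  (Ment T q)⁻¹ * Matrix.diagonal q.1 * Ment T q

lemma aux17 {n : ℕ} (T : Fin n → Fin n → (ℂ × ℂ) → ℂ)
    (hT : ∀ j i, Differentiable ℂ (T j i))
    (hinv : ∀ p : DNPt n,
      IsUnit (Matrix.of (fun j i => T j i (p.1 j, p.2 j)) : Matrix (Fin n) (Fin n) ℂ).det)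
    (p : DNPt n) (i j j0 : Fin n) (v : DNPt n)
    (hv : ∀ a, a ≠ j0 → v.1 a = 0 ∧ v.2 a = 0) :
    p.1 j0 * fderiv ℂ (fun q => Fent T q i j) p v
      = ∑ k, Fent T p i k * fderiv ℂ (fun q => Fent T q k j) p v := by
  classical
  have hinv' : ∀ q : DNPt n, IsUnit (Ment T q).det := hinv
  have hprojd : ∀ a : Fin n, Differentiable ℂ fun q : DNPt n => (q.1 a, q.2 a) :=
    fun a => Differentiable.prodMk (((differentiable_apply a).comp differentiable_fst :
        Differentiable ℂ ((fun x : Fin n → ℂ => x a) ∘ (Prod.fst : DNPt n → Fin n → ℂ))))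
      (((differentiable_apply a).comp differentiable_snd :
        Differentiable ℂ ((fun x : Fin n → ℂ => x a) ∘ (Prod.snd : DNPt n → Fin n → ℂ))))
  have hMd : ∀ a b, Differentiable ℂ (fun q : DNPt n => Ment T q a b) :=
    fun a b => (hT a b).comp (hprojd a)
  have hdet : Differentiable ℂ fun q : DNPt n => (Ment T q).det := myDiffDet hMd
  have hdet0 : ∀ q : DNPt n, (Ment T q).det ≠ 0 := fun q => (hinv' q).ne_zero
  have hadj : ∀ a b, Differentiable ℂ fun q : DNPt n => (Ment T q).adjugate a b := by
    intro a b
    have h1 : (fun q : DNPt n => (Ment T q).adjugate a b)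
        = fun q => ((Ment T q).updateRow b (Pi.single a 1)).det := by
      funext q; rw [Matrix.adjugate_apply]
    rw [h1]
    refine myDiffDet ?_
    intro c d
    by_cases hc : c = b
    · simpa [Matrix.updateRow_apply, hc] using differentiable_const (Pi.single a (1:ℂ) d)
    · simpa [Matrix.updateRow_apply, hc] using hMd c d
  have hinve : ∀ a b, Differentiable ℂ fun q : DNPt n => (Ment T q)⁻¹ a b := by
    intro a b
    have h1 : (fun q : DNPt n => (Ment T q)⁻¹ a b)
        = fun q => ((Ment T q).det)⁻¹ * (Ment T q).adjugate a b := by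
      funext q; rw [Matrix.inv_def, Matrix.smul_apply, Ring.inverse_eq_inv, smul_eq_mul]
    rw [h1]
    exact (hdet.inv hdet0).mul (hadj a b)
  have hFeq : ∀ (q : DNPt n) a b,
      Fent T q a b = ∑ c, (Ment T q)⁻¹ a c * (q.1 c * Ment T q c b) := by
    intro q a b
    show ((Ment T q)⁻¹ * Matrix.diagonal q.1 * Ment T q) a b = _
    rw [Matrix.mul_assoc, Matrix.mul_apply]
    exact Finset.sum_congr rfl fun c _ => by rw [Matrix.diagonal_mul]
  have hFd : ∀ a b, Differentiable ℂ fun q : DNPt n => Fent T q a b := by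
    intro a b
    have h1 : (fun q : DNPt n => Fent T q a b)
        = fun q => ∑ c, (Ment T q)⁻¹ a c * (q.1 c * Ment T q c b) :=
      funext fun q => hFeq q a b
    rw [h1]
    exact Differentiable.fun_sum fun c _ =>
      (hinve a c).mul ((((differentiable_apply c).comp differentiable_fst :
        Differentiable ℂ ((fun x : Fin n → ℂ => x c) ∘ (Prod.fst : DNPt n → Fin n → ℂ)))).mul (hMd c b))
  -- derivative of coordinate function
  have hfst : ∀ a : Fin n, fderiv ℂ (fun q : DNPt n => q.1 a) p v = v.1 a := by
    intro a
    have h := ((ContinuousLinearMap.proj (R := ℂ) (φ := fun _ : Fin n => ℂ) a).comp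
      (ContinuousLinearMap.fst ℂ (Fin n → ℂ) (Fin n → ℂ))).hasFDerivAt (x := p)
    have h2 : HasFDerivAt (fun q : DNPt n => q.1 a)
        ((ContinuousLinearMap.proj (R := ℂ) (φ := fun _ : Fin n => ℂ) a).comp
          (ContinuousLinearMap.fst ℂ (Fin n → ℂ) (Fin n → ℂ))) p := h
    rw [h2.fderiv]; rfl
  -- derivative of M entries
  have hMder : ∀ a b, fderiv ℂ (fun q : DNPt n => Ment T q a b) p v
      = fderiv ℂ (T a b) (p.1 a, p.2 a) (v.1 a, v.2 a) := by
    intro a b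
    set La := ((ContinuousLinearMap.proj (R := ℂ) (φ := fun _ : Fin n => ℂ) a).comp
        (ContinuousLinearMap.fst ℂ (Fin n → ℂ) (Fin n → ℂ))).prod
      ((ContinuousLinearMap.proj (R := ℂ) (φ := fun _ : Fin n => ℂ) a).comp
        (ContinuousLinearMap.snd ℂ (Fin n → ℂ) (Fin n → ℂ))) with hLa
    have hL : HasFDerivAt (fun q : DNPt n => (q.1 a, q.2 a)) La p := La.hasFDerivAt
    have h1 : HasFDerivAt (fun q : DNPt n => Ment T q a b)
        ((fderiv ℂ (T a b) (p.1 a, p.2 a)).comp La) p :=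
      HasFDerivAt.comp p ((hT a b (p.1 a, p.2 a)).hasFDerivAt) hL
    rw [h1.fderiv]; rfl
  have hMder0 : ∀ a b, a ≠ j0 → fderiv ℂ (fun q : DNPt n => Ment T q a b) p v = 0 := by
    intro a b ha
    rw [hMder a b, (hv a ha).1, (hv a ha).2]
    show fderiv ℂ (T a b) (p.1 a, p.2 a) (0 : ℂ × ℂ) = 0
    exact (fderiv ℂ (T a b) (p.1 a, p.2 a)).map_zero
  set u : Fin n → ℂ := fun k => fderiv ℂ (fun q => Fent T q k j) p v with hu
  -- Step A
  have stepA : ∀ a, a ≠ j0 → ∑ k, Ment T p a k * u k = 0 := by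
    intro a ha
    have hfun : (fun q : DNPt n => ∑ k, Ment T q a k * Fent T q k j)
        = fun q => q.1 a * Ment T q a j := by
      funext q
      have h1 : ∑ k, Ment T q a k * Fent T q k j = (Ment T q * Fent T q) a j :=
        (Matrix.mul_apply).symm
      rw [h1]
      have h2 : Ment T q * Fent T q = Matrix.diagonal q.1 * Ment T q := by
        simp only [Fent]
        rw [← Matrix.mul_assoc, ← Matrix.mul_assoc, Matrix.mul_nonsing_inv _ (hinv' q),
          Matrix.one_mul]
      rw [h2, Matrix.diagonal_mul]
    have hL : fderiv ℂ (fun q : DNPt n => ∑ k, Ment T q a k * Fent T q k j) p v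
        = ∑ k, (fderiv ℂ (fun q : DNPt n => Ment T q a k) p v * Fent T p k j
            + Ment T p a k * u k) := by
      rw [fderiv_fun_sum (A := fun k q => Ment T q a k * Fent T q k j) (fun k _ => ((hMd a k) p).mul ((hFd k j) p))]
      rw [ContinuousLinearMap.sum_apply]
      refine Finset.sum_congr rfl fun k _ => ?_
      rw [fderiv_fun_mul ((hMd a k) p) ((hFd k j) p)]
      simp only [ContinuousLinearMap.add_apply, ContinuousLinearMap.coe_smul',
        Pi.smul_apply, smul_eq_mul, hu]
      ring
    have hR : fderiv ℂ (fun q : DNPt n => q.1 a * Ment T q a j) p v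
        = p.1 a * fderiv ℂ (fun q : DNPt n => Ment T q a j) p v + Ment T p a j * v.1 a := by
      have hc : DifferentiableAt ℂ (fun q : DNPt n => q.1 a) p :=
        (((differentiable_apply a).comp differentiable_fst :
        Differentiable ℂ ((fun x : Fin n → ℂ => x a) ∘ (Prod.fst : DNPt n → Fin n → ℂ)))) p
      rw [fderiv_fun_mul hc ((hMd a j) p)]
      simp only [ContinuousLinearMap.add_apply, ContinuousLinearMap.coe_smul',
        Pi.smul_apply, smul_eq_mul, hfst a]
    have hgg : ∑ k, (fderiv ℂ (fun q : DNPt n => Ment T q a k) p v * Fent T p k j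
          + Ment T p a k * u k)
        = p.1 a * fderiv ℂ (fun q : DNPt n => Ment T q a j) p v + Ment T p a j * v.1 a := by
      rw [← hL, ← hR, hfun]
    simp only [hMder0 _ _ ha, (hv a ha).1, zero_mul, mul_zero, zero_add, add_zero,
      Finset.sum_const_zero] at hgg
    exact hgg
  -- Step B
  have hw0 : ∀ a, a ≠ j0 → (Ment T p *ᵥ u) a = 0 := by
    intro a ha
    have h : (Ment T p *ᵥ u) a = ∑ k, Ment T p a k * u k := rfl
    rw [h]; exact stepA a ha
  have hdiagw : Matrix.diagonal p.1 *ᵥ (Ment T p *ᵥ u) = p.1 j0 • (Ment T p *ᵥ u) := by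
    funext a
    have hd : (Matrix.diagonal p.1 *ᵥ (Ment T p *ᵥ u)) a = p.1 a * (Ment T p *ᵥ u) a := by
      simp [Matrix.mulVec, dotProduct, Matrix.diagonal_apply, ite_mul]
    rw [hd]
    by_cases ha : a = j0
    · subst ha; rfl
    · rw [Pi.smul_apply, smul_eq_mul, hw0 a ha, mul_zero, mul_zero]
  have h1 : Fent T p *ᵥ u = p.1 j0 • u := by
    show ((Ment T p)⁻¹ * Matrix.diagonal p.1 * Ment T p) *ᵥ u = p.1 j0 • u
    rw [Matrix.mul_assoc, ← Matrix.mulVec_mulVec, ← Matrix.mulVec_mulVec, hdiagw,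
      Matrix.mulVec_smul]
    have h2 : (Ment T p)⁻¹ *ᵥ (Ment T p *ᵥ u) = u := by
      rw [Matrix.mulVec_mulVec, Matrix.nonsing_inv_mul _ (hinv' p), Matrix.one_mulVec]
    rw [h2]
  have h3 : ∑ k, Fent T p i k * u k = (Fent T p *ᵥ u) i := rfl
  rw [h3, h1]
  rfl

/-- if `T` is an invertible matrix of functions whose `j`-th row depends
only on `(λ_j, μ_j)`, `H = (H_1,…,H_n)` are functions with `T·H = V` where the `j`-th
component of `V` also depends only on `(λ_j, μ_j)` (Stäckel properties), then
`F := T⁻¹ Λ T` (with `Λ = diag(λ_1,…,λ_n)`) satisfies the entrywise identity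
`N* dF = F dF`, where `N*` multiplies the `dλ_j`- and `dμ_j`-components of a
differential by `λ_j`.  Concretely, for every point `p`, all entries `(i,j)` and every
coordinate direction (`λ_{j₀}` or `μ_{j₀}`):
`λ_{j₀} ∂ F_{ij} = ∑ₖ F_{ik} ∂ F_{kj}`. -/
theorem stmt17 (n : ℕ)
    (T : Fin n → Fin n → (ℂ × ℂ) → ℂ) (V : Fin n → (ℂ × ℂ) → ℂ)
    (H : Fin n → DNPt n → ℂ)
    (hT : ∀ j i, Differentiable ℂ (T j i))
    (hH : ∀ i, Differentiable ℂ (H i))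
    (hinv : ∀ p : DNPt n,
      IsUnit (Matrix.of (fun j i => T j i (p.1 j, p.2 j)) : Matrix (Fin n) (Fin n) ℂ).det)
    (hTH : ∀ (p : DNPt n) (j : Fin n),
      ∑ i, T j i (p.1 j, p.2 j) * H i p = V j (p.1 j, p.2 j)) :
    ∀ (p : DNPt n) (i j j0 : Fin n),
      (p.1 j0 *
          Dlam j0 (fun q =>
            (((Matrix.of fun j' i' => T j' i' (q.1 j', q.2 j'))⁻¹
                * Matrix.diagonal q.1
                * Matrix.of fun j' i' => T j' i' (q.1 j', q.2 j')) i j)) p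
        = ∑ k,
            ((Matrix.of fun j' i' => T j' i' (p.1 j', p.2 j'))⁻¹
                * Matrix.diagonal p.1
                * Matrix.of fun j' i' => T j' i' (p.1 j', p.2 j')) i k
              * Dlam j0 (fun q =>
                  (((Matrix.of fun j' i' => T j' i' (q.1 j', q.2 j'))⁻¹
                      * Matrix.diagonal q.1
                      * Matrix.of fun j' i' => T j' i' (q.1 j', q.2 j')) k j)) p)
      ∧ (p.1 j0 *
          Dmu j0 (fun q =>
            (((Matrix.of fun j' i' => T j' i' (q.1 j', q.2 j'))⁻¹
                * Matrix.diagonal q.1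
                * Matrix.of fun j' i' => T j' i' (q.1 j', q.2 j')) i j)) p
        = ∑ k,
            ((Matrix.of fun j' i' => T j' i' (p.1 j', p.2 j'))⁻¹
                * Matrix.diagonal p.1
                * Matrix.of fun j' i' => T j' i' (p.1 j', p.2 j')) i k
              * Dmu j0 (fun q =>
                  (((Matrix.of fun j' i' => T j' i' (q.1 j', q.2 j'))⁻¹
                      * Matrix.diagonal q.1
                      * Matrix.of fun j' i' => T j' i' (q.1 j', q.2 j')) k j)) p) := by
  intro p i j j0
  constructor
  · exact aux17 T hT hinv p i j j0 (Pi.single j0 1, 0)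
      (fun a ha => ⟨Pi.single_eq_of_ne ha 1, rfl⟩)
  · exact aux17 T hT hinv p i j j0 (0, Pi.single j0 1)
      (fun a ha => ⟨rfl, Pi.single_eq_of_ne ha 1⟩)
end
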